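/- arXiv:2504.14719 — 5 statements merged into one kernel-verified Lean document; each statement's English description precedes it below -/
import Mathlib

section
/- Any two nontrivial divisible ordered abelian groups are elementarily equivalent in the language of ordered abelian groups {0, +, <}. -/
/-- The functions of the language of ordered abelian groups: a constant `0` and a
binary operation `+`. -/
inductive OAGFunc : ℕ → Type
  | zero : OAGFunc 0
  | add : OAGFunc 2

/-- The relations of the language of ordered abelian groups: a binary relation `<`. -/
inductive OAGRel : ℕ → Type
  | lt : OAGRel 2

/-- The first-order language `{0, +, <}` of ordered abelian groups. -/
def Loag : FirstOrder.Language :=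
  ⟨OAGFunc, OAGRel⟩

/-- Any ordered abelian group is naturally an `Loag`-structure. -/
instance instLoagStructure (G : Type*) [AddCommGroup G] [LinearOrder G] [IsOrderedAddMonoid G] :
    FirstOrder.Language.Structure Loag G where
  funMap {n} f x :=
    match f with
    | OAGFunc.zero => 0
    | OAGFunc.add => x 0 + x 1
  RelMap {n} r x :=
    match r with
    | OAGRel.lt => x 0 < x 1

/-!
Call tuples `a` in `G` and `b` in `H` `N`-equivalent if every integer combination with
coefficients of absolute value at most `N` has the same sign at `a` as at `b`. Atomic formulas
are decided at some finite level. The quantifier step is a bounded back-and-forth: if `a` and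
`b` are `2 · N! · N`-equivalent and `g ∈ G`, clearing the denominators `d ≤ N` by `N!` shows
that `(a, g)` and `(b, h)` are `N`-equivalent as soon as `N! • h` lies in the same cut of the
finite chain of level-`N! · N` combinations of `b` as `N! • g` does for `a`. Such a point exists
because `H` is dense without endpoints, and it is divisible by `N!`. Hence every formula is
decided at some finite level, and empty tuples are equivalent at every level.
-/

open FirstOrder FirstOrder.Language

section

variable {G H : Type*} [AddCommGroup G] [AddCommGroup H] {n : ℕ}

theorem linearCombination_snoc (a : Fin n → G) (g : G) (c : Fin n → ℤ) (d : ℤ) :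
    Fintype.linearCombination ℤ (Fin.snoc a g) (Fin.snoc c d) =
      Fintype.linearCombination ℤ a c + d • g := by
  simp [Fintype.linearCombination_apply, Fin.sum_univ_castSucc]

variable [LinearOrder G] [LinearOrder H]

def SignEquiv (N : ℕ) (a : Fin n → G) (b : Fin n → H) : Prop :=
  ∀ c : Fin n → ℤ, (∀ i, |c i| ≤ N) →
    cmp (Fintype.linearCombination ℤ a c) 0 = cmp (Fintype.linearCombination ℤ b c) 0

theorem SignEquiv.symm {N : ℕ} {a : Fin n → G} {b : Fin n → H} (hab : SignEquiv N a b) :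
    SignEquiv N b a :=
  fun c hc => (hab c hc).symm

theorem SignEquiv.mono {M N : ℕ} {a : Fin n → G} {b : Fin n → H} (hab : SignEquiv N a b)
    (hMN : M ≤ N) : SignEquiv M a b :=
  fun c hc => hab c fun i => (hc i).trans (by exact_mod_cast hMN)

variable [IsOrderedAddMonoid G] [IsOrderedAddMonoid H]

theorem denselyOrdered_of_exists_nsmul_eq (hdiv : ∀ (n : ℕ) (g : G), 0 < n → ∃ h : G, n • h = g) :
    DenselyOrdered G := by
  refine ⟨fun x y hxy => ?_⟩
  obtain ⟨z, hz⟩ := hdiv 2 (x + y) two_pos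
  refine ⟨z, lt_of_nsmul_lt_nsmul_right 2 ?_, lt_of_nsmul_lt_nsmul_right 2 ?_⟩
  · rw [hz, two_nsmul]; exact add_lt_add_right hxy x
  · rw [hz, two_nsmul]; exact add_lt_add_left hxy y

theorem cmp_zero_eq_swap_cmp_neg (z : G) : cmp z 0 = (cmp (-z) 0).swap := by
  rw [cmp_swap, ← cmp_add_right z 0 (-z), add_neg_cancel, zero_add]

theorem cmp_add_nsmul_zero {e : ℕ} (he : 0 < e) (x y : G) (d : ℕ) :
    cmp (x + d • y) 0 = (cmp (-(e • x)) ((e * d) • y)).swap := by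
  rw [cmp_swap, ← cmp_add_right ((e * d) • y) (-(e • x)) (e • x), neg_add_cancel, mul_nsmul',
    ← nsmul_add, ← smul_zero e, (nsmul_right_strictMono he.ne').cmp_map_eq, add_comm, smul_zero]

namespace SignEquiv

variable {N : ℕ} {a : Fin n → G} {b : Fin n → H}

theorem cmp_eq (hab : SignEquiv N a b) {c₁ c₂ : Fin n → ℤ} (hc : ∀ i, |c₁ i - c₂ i| ≤ N) :
    cmp (Fintype.linearCombination ℤ a c₁) (Fintype.linearCombination ℤ a c₂) =
      cmp (Fintype.linearCombination ℤ b c₁) (Fintype.linearCombination ℤ b c₂) := by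
  simpa only [map_sub, cmp_sub_zero] using hab (c₁ - c₂) hc

theorem exists_cmp_eq [DenselyOrdered H] [NoMinOrder H] [NoMaxOrder H] {M : ℕ}
    (hab : SignEquiv (2 * M) a b) (x : G) :
    ∃ y : H, ∀ c : Fin n → ℤ, (∀ i, |c i| ≤ M) →
      cmp (Fintype.linearCombination ℤ a c) x = cmp (Fintype.linearCombination ℤ b c) y := by
  let box : Finset (Fin n → ℤ) := Fintype.piFinset fun _ => Finset.Icc (-(M : ℤ)) M
  have mem_box {c : Fin n → ℤ} : c ∈ box ↔ ∀ i, |c i| ≤ M := by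
    simp only [box, Fintype.mem_piFinset, Finset.mem_Icc, abs_le]
  let f : Order.PartialIso G H :=
    ⟨box.image fun c => (Fintype.linearCombination ℤ a c, Fintype.linearCombination ℤ b c), by
      simp only [Finset.mem_image, forall_exists_index, and_imp]
      rintro _ c₁ hc₁ rfl _ c₂ hc₂ rfl
      refine hab.cmp_eq fun i => (abs_sub _ _).trans ?_
      have := add_le_add (mem_box.1 hc₁ i) (mem_box.1 hc₂ i)
      push_cast at this ⊢
      linarith⟩
  obtain ⟨y, hy⟩ := Order.PartialIso.exists_across f x
  exact ⟨y, fun c hc => hy _ (Finset.mem_image_of_mem _ (mem_box.2 hc))⟩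

theorem snoc_of_cmp_eq (hab : SignEquiv N a b) {g : G} {h : H}
    (hgh : ∀ c : Fin n → ℤ, (∀ i, |c i| ≤ N.factorial * N) →
      cmp (Fintype.linearCombination ℤ a c) (N.factorial • g) =
        cmp (Fintype.linearCombination ℤ b c) (N.factorial • h)) :
    SignEquiv N (Fin.snoc a g) (Fin.snoc b h) := by
  -- Scaling by `N! / d` turns the sign of `x + d • g` into the position of `N! • g`.
  have pos_coeff (c : Fin n → ℤ) (hc : ∀ i, |c i| ≤ N) (d : ℕ) (hd : 0 < d) (hdN : d ≤ N) :
      cmp (Fintype.linearCombination ℤ a c + d • g) 0 =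
        cmp (Fintype.linearCombination ℤ b c + d • h) 0 := by
    have hdvd : d ∣ N.factorial := Nat.dvd_factorial hd hdN
    have he : 0 < N.factorial / d := Nat.div_pos (Nat.le_of_dvd N.factorial_pos hdvd) hd
    rw [cmp_add_nsmul_zero he, cmp_add_nsmul_zero he, Nat.div_mul_cancel hdvd, ← map_nsmul,
      ← map_nsmul, ← map_neg, ← map_neg, hgh]
    intro i
    rw [Pi.neg_apply, abs_neg, Pi.smul_apply, nsmul_eq_mul, abs_mul, Nat.abs_cast]
    exact mul_le_mul (by exact_mod_cast Nat.div_le_self _ _) (hc i) (abs_nonneg _) (by positivity)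
  intro c' hc'
  obtain ⟨c, d, rfl⟩ : ∃ c d, c' = Fin.snoc c d := ⟨_, _, (Fin.snoc_init_self c').symm⟩
  have hc (i : Fin n) : |c i| ≤ N := by simpa using hc' i.castSucc
  have hd : |d| ≤ N := by simpa using hc' (Fin.last n)
  rw [linearCombination_snoc, linearCombination_snoc]
  obtain ⟨k, rfl | rfl⟩ := Int.eq_nat_or_neg d
  · rcases k.eq_zero_or_pos with rfl | hk
    · simpa using hab c hc
    · simp only [natCast_zsmul]
      exact pos_coeff c hc k hk (by simpa using hd)
  · rcases k.eq_zero_or_pos with rfl | hk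
    · simpa using hab c hc
    · rw [cmp_zero_eq_swap_cmp_neg, cmp_zero_eq_swap_cmp_neg (_ + _)]
      simp only [neg_add, neg_smul, neg_neg, natCast_zsmul, ← map_neg]
      rw [pos_coeff (-c) (by simpa using hc) k hk (by simpa using hd)]

theorem exists_snoc [Nontrivial H] (hH : ∀ (n : ℕ) (h : H), 0 < n → ∃ h' : H, n • h' = h)
    (hab : SignEquiv (2 * (N.factorial * N)) a b) (g : G) :
    ∃ h : H, SignEquiv N (Fin.snoc a g) (Fin.snoc b h) := by
  have := denselyOrdered_of_exists_nsmul_eq hH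
  obtain ⟨y, hy⟩ := hab.exists_cmp_eq (N.factorial • g)
  obtain ⟨h, rfl⟩ := hH N.factorial y N.factorial_pos
  refine ⟨h, (hab.mono ?_).snoc_of_cmp_eq hy⟩
  calc N ≤ N.factorial * N := Nat.le_mul_of_pos_left N N.factorial_pos
    _ ≤ 2 * (N.factorial * N) := Nat.le_mul_of_pos_left _ two_pos

end SignEquiv

end

section Formulas

variable {n : ℕ}

def termCoeff : Loag.Term (Empty ⊕ Fin n) → Fin n → ℤ
  | .var (Sum.inl e) => e.elim
  | .var (Sum.inr i) => Pi.single i 1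
  | .func OAGFunc.zero _ => 0
  | .func OAGFunc.add ts => termCoeff (ts 0) + termCoeff (ts 1)

variable {G H : Type*} [AddCommGroup G] [LinearOrder G] [IsOrderedAddMonoid G]
  [AddCommGroup H] [LinearOrder H] [IsOrderedAddMonoid H]

theorem realize_eq_linearCombination_termCoeff (v : Empty → G) (a : Fin n → G)
    (t : Loag.Term (Empty ⊕ Fin n)) :
    t.realize (Sum.elim v a) = Fintype.linearCombination ℤ a (termCoeff t) := by
  induction t with
  | var x =>
    rcases x with e | i
    · exact e.elim
    · simp [termCoeff]
  | func f ts ih =>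
    cases f with
    | zero => exact (map_zero _).symm
    | add =>
      change (ts 0).realize _ + (ts 1).realize _ = _
      rw [ih 0, ih 1, termCoeff, map_add]

theorem exists_signEquiv_cmp_realize_eq (t₁ t₂ : Loag.Term (Empty ⊕ Fin n)) :
    ∃ N : ℕ, ∀ (v : Empty → G) (w : Empty → H) (a : Fin n → G) (b : Fin n → H),
      SignEquiv N a b →
        cmp (t₁.realize (Sum.elim v a)) (t₂.realize (Sum.elim v a)) =
          cmp (t₁.realize (Sum.elim w b)) (t₂.realize (Sum.elim w b)) := by
  obtain ⟨N, hN⟩ := Finite.exists_le fun i => (termCoeff t₁ i - termCoeff t₂ i).natAbs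
  refine ⟨N, fun v w a b hab => ?_⟩
  simp only [realize_eq_linearCombination_termCoeff]
  exact hab.cmp_eq fun i => by rw [Int.abs_eq_natAbs]; exact_mod_cast hN i

theorem exists_signEquiv_realize_iff [Nontrivial G] [Nontrivial H]
    (hG : ∀ (n : ℕ) (g : G), 0 < n → ∃ g' : G, n • g' = g)
    (hH : ∀ (n : ℕ) (h : H), 0 < n → ∃ h' : H, n • h' = h)
    (φ : Loag.BoundedFormula Empty n) :
    ∃ N : ℕ, ∀ (v : Empty → G) (w : Empty → H) (a : Fin n → G) (b : Fin n → H),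
      SignEquiv N a b → (φ.Realize v a ↔ φ.Realize w b) := by
  induction φ with
  | falsum => exact ⟨0, fun _ _ _ _ _ => Iff.rfl⟩
  | equal t₁ t₂ =>
    obtain ⟨N, hN⟩ := exists_signEquiv_cmp_realize_eq (G := G) (H := H) t₁ t₂
    refine ⟨N, fun v w a b hab => ?_⟩
    simp only [BoundedFormula.Realize, ← cmp_eq_eq_iff, hN v w a b hab]
  | rel R ts =>
    cases R
    obtain ⟨N, hN⟩ := exists_signEquiv_cmp_realize_eq (G := G) (H := H) (ts 0) (ts 1)
    refine ⟨N, fun v w a b hab => ?_⟩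
    change (ts 0).realize _ < (ts 1).realize _ ↔ (ts 0).realize _ < (ts 1).realize _
    simp only [← cmp_eq_lt_iff, hN v w a b hab]
  | imp φ ψ ihφ ihψ =>
    obtain ⟨N₁, hN₁⟩ := ihφ
    obtain ⟨N₂, hN₂⟩ := ihψ
    refine ⟨max N₁ N₂, fun v w a b hab => ?_⟩
    simp only [BoundedFormula.realize_imp]
    rw [hN₁ v w a b (hab.mono (le_max_left _ _)), hN₂ v w a b (hab.mono (le_max_right _ _))]
  | all φ ih =>
    obtain ⟨N, hN⟩ := ih
    refine ⟨2 * (N.factorial * N), fun v w a b hab => ?_⟩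
    simp only [BoundedFormula.realize_all]
    constructor
    · intro hφ h
      obtain ⟨g, hgh⟩ := hab.symm.exists_snoc hG h
      exact (hN v w _ _ hgh.symm).1 (hφ g)
    · intro hφ g
      obtain ⟨h, hgh⟩ := hab.exists_snoc hH g
      exact (hN v w _ _ hgh).2 (hφ h)

end Formulas

/-- Any two nontrivial divisible ordered abelian groups are elementarily equivalent in
the language `{0, +, <}` of ordered abelian groups. -/
theorem nontrivial_divisible_oag_elementarilyEquivalent
    (G H : Type*) [AddCommGroup G] [LinearOrder G] [IsOrderedAddMonoid G]
    [AddCommGroup H] [LinearOrder H] [IsOrderedAddMonoid H]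
    [Nontrivial G] [Nontrivial H]
    (hG : ∀ (n : ℕ) (g : G), 0 < n → ∃ h : G, n • h = g)
    (hH : ∀ (n : ℕ) (g : H), 0 < n → ∃ h : H, n • h = g) :
    FirstOrder.Language.ElementarilyEquivalent Loag G H := by
  refine elementarilyEquivalent_iff.2 fun φ => ?_
  obtain ⟨N, hN⟩ := exists_signEquiv_realize_iff hG hH φ
  exact hN default default default default fun c _ => by simp [Fintype.linearCombination_apply]
end

section
/- Terjanian's quartic hypersurface has no nontrivial zero modulo 16: there is no tuple (x,y,z,u,v,w) ∈ (Z/16)^18 with x,y,z,u,v,w ∈ (Z/16)^3, not all coordinates divisible by 2, such that G(x)+G(y)+G(z)+4G(u)+4G(v)+4G(w) ≡ 0 (mod 16), where G(X_1,X_2,X_3) = X_1^4+X_2^4+X_3^4−X_1^2X_2^2−X_1^2X_3^2−X_2^2X_3^2−X_1X_2X_3(X_1+X_2+X_3). Consequently, the corresponding homogeneous quartic in 18 variables has no nontrivial zero over Q_2, so Q_2 is not C_2. -/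
/-- Terjanian's quartic form `G(X₁, X₂, X₃)` over a commutative ring. -/
def terjanianG {R : Type*} [CommRing R] (x : Fin 3 → R) : R :=
  x 0 ^ 4 + x 1 ^ 4 + x 2 ^ 4
    - x 0 ^ 2 * x 1 ^ 2 - x 0 ^ 2 * x 2 ^ 2 - x 1 ^ 2 * x 2 ^ 2
    - x 0 * x 1 * x 2 * (x 0 + x 1 + x 2)

/-- A field `K` is `C₂` if every homogeneous polynomial of degree `d ≥ 1` in `n + 1 > d ^ 2`
variables has a nontrivial zero. -/
def IsC2Field (K : Type*) [Field K] : Prop :=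
  ∀ (n d : ℕ) (f : MvPolynomial (Fin (n + 1)) K),
    f.IsHomogeneous d → 1 ≤ d → d ^ 2 ≤ n →
      ∃ x : Fin (n + 1) → K, x ≠ 0 ∧ MvPolynomial.eval x f = 0

/-! Modulo 4, `G(a)` is `0` when every coordinate of `a` is even and `1` otherwise, while
`G(2c) = 16 G(c)`. Reducing `F = 0` modulo 4 therefore forces `x, y, z` to be even; then
`G(x), G(y), G(z)` vanish modulo 16, so `G(u) + G(v) + G(w) ≡ 0 mod 4` and `u, v, w` are even too.
A nontrivial zero of `F` over `ℚ₂`, rescaled to lie in `ℤ₂` with a unit coordinate, would reduce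
to a primitive zero modulo 16. -/

open MvPolynomial

section Form

variable {σ R S : Type*} [CommRing R] [CommRing S]

theorem map_terjanianG (f : R →+* S) (x : Fin 3 → R) :
    f (terjanianG x) = terjanianG (f ∘ x) := by
  simp only [terjanianG, Function.comp_apply, map_add, map_sub, map_mul, map_pow]

theorem terjanianG_mul_const (x : Fin 3 → R) (t : R) :
    terjanianG (fun i => x i * t) = terjanianG x * t ^ 4 := by
  simp only [terjanianG]
  ring

theorem terjanianG_two_mul (x : Fin 3 → R) : terjanianG (2 * x) = 16 * terjanianG x := by
  simp only [terjanianG, Pi.mul_apply, Pi.ofNat_apply]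
  ring

def terjanianF (v : Fin 6 → Fin 3 → R) : R :=
  terjanianG (v 0) + terjanianG (v 1) + terjanianG (v 2)
    + 4 * (terjanianG (v 3) + terjanianG (v 4) + terjanianG (v 5))

theorem map_terjanianF (f : R →+* S) (v : Fin 6 → Fin 3 → R) :
    f (terjanianF v) = terjanianF (fun k i => f (v k i)) := by
  simp only [terjanianF, map_add, map_mul, map_ofNat, map_terjanianG]
  rfl

theorem terjanianF_mul_const (v : Fin 6 → Fin 3 → R) (t : R) :
    terjanianF (fun k i => v k i * t) = terjanianF v * t ^ 4 := by
  simp only [terjanianF, terjanianG_mul_const]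
  ring

theorem isHomogeneous_terjanianG {x : Fin 3 → MvPolynomial σ R}
    (hx : ∀ i, (x i).IsHomogeneous 1) :
    (terjanianG x).IsHomogeneous 4 := by
  have h4 (i) : (x i ^ 4).IsHomogeneous 4 := (hx i).pow 4
  have h22 (i j) : (x i ^ 2 * x j ^ 2).IsHomogeneous 4 := ((hx i).pow 2).mul ((hx j).pow 2)
  have h31 : (x 0 * x 1 * x 2 * (x 0 + x 1 + x 2)).IsHomogeneous 4 :=
    (((hx 0).mul (hx 1)).mul (hx 2)).mul (((hx 0).add (hx 1)).add (hx 2))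
  exact (((((((h4 0).add (h4 1)).add (h4 2)).sub (h22 0 1)).sub (h22 0 2)).sub (h22 1 2)).sub h31)

theorem isHomogeneous_terjanianF {v : Fin 6 → Fin 3 → MvPolynomial σ R}
    (hv : ∀ k i, (v k i).IsHomogeneous 1) :
    (terjanianF v).IsHomogeneous 4 := by
  have hG (k) : (terjanianG (v k)).IsHomogeneous 4 := isHomogeneous_terjanianG (hv k)
  have hC : ((4 : MvPolynomial σ R)).IsHomogeneous 0 := by
    rw [← map_ofNat C 4]
    exact isHomogeneous_C σ _
  exact (((hG 0).add (hG 1)).add (hG 2)).add (hC.mul (((hG 3).add (hG 4)).add (hG 5)))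

end Form

noncomputable def terjanianPoly (R : Type*) [CommRing R] : MvPolynomial (Fin 18) R :=
  terjanianF fun k i => X (finProdFinEquiv (k, i))

theorem isHomogeneous_terjanianPoly (R : Type*) [CommRing R] :
    (terjanianPoly R).IsHomogeneous 4 :=
  isHomogeneous_terjanianF fun _ _ => isHomogeneous_X _ _

theorem eval_terjanianPoly {R : Type*} [CommRing R] (x : Fin 18 → R) :
    eval x (terjanianPoly R) = terjanianF fun k i => x (finProdFinEquiv (k, i)) := by
  simp only [terjanianPoly, map_terjanianF, eval_X]

local notation "φ" => ZMod.castHom (show 4 ∣ 16 by norm_num) (ZMod 4)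

theorem terjanianG_zmod_four (a : Fin 3 → ZMod 4) :
    terjanianG a = if ∀ i, 2 ∣ a i then 0 else 1 := by
  revert a
  decide

theorem two_dvd_castHom_iff (a : ZMod 16) : 2 ∣ φ a ↔ 2 ∣ a := by
  revert a
  decide

theorem castHom_terjanianG (a : Fin 3 → ZMod 16) :
    φ (terjanianG a) = if ∀ i, 2 ∣ a i then 0 else 1 := by
  simp only [map_terjanianG, terjanianG_zmod_four, Function.comp_apply, two_dvd_castHom_iff]

theorem terjanianG_eq_zero_of_two_dvd (a : Fin 3 → ZMod 16) (ha : ∀ i, 2 ∣ a i) :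
    terjanianG a = 0 := by
  choose c hc using ha
  rw [show a = 2 * c from funext hc, terjanianG_two_mul]
  exact zero_mul _

theorem two_dvd_of_castHom_terjanianG_add (a b c : Fin 3 → ZMod 16)
    (h : φ (terjanianG a + terjanianG b + terjanianG c) = 0) :
    (∀ i, 2 ∣ a i) ∧ (∀ i, 2 ∣ b i) ∧ (∀ i, 2 ∣ c i) := by
  rw [map_add, map_add, castHom_terjanianG, castHom_terjanianG, castHom_terjanianG] at h
  split_ifs at h with ha hb hc <;> first | exact ⟨ha, hb, hc⟩ | exact absurd h (by decide)

theorem castHom_eq_zero_of_four_mul_eq_zero (s : ZMod 16) (h : 4 * s = 0) : φ s = 0 := by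
  revert s
  decide

theorem two_dvd_of_terjanianF_eq_zero (v : Fin 6 → Fin 3 → ZMod 16) (h : terjanianF v = 0) :
    ∀ k i, 2 ∣ v k i := by
  have hfour : φ 4 = 0 := by decide
  obtain ⟨h0, h1, h2⟩ := two_dvd_of_castHom_terjanianG_add (v 0) (v 1) (v 2) <| by
    simpa only [terjanianF, map_add, map_mul, hfour, zero_mul, add_zero, map_zero]
      using congrArg φ h
  rw [terjanianF, terjanianG_eq_zero_of_two_dvd _ h0, terjanianG_eq_zero_of_two_dvd _ h1,
    terjanianG_eq_zero_of_two_dvd _ h2, zero_add, zero_add, zero_add] at h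
  obtain ⟨h3, h4, h5⟩ :=
    two_dvd_of_castHom_terjanianG_add (v 3) (v 4) (v 5) (castHom_eq_zero_of_four_mul_eq_zero _ h)
  intro k
  fin_cases k
  exacts [h0, h1, h2, h3, h4, h5]

theorem PadicInt.exists_primitive_mul_of_ne_zero {p : ℕ} [Fact p.Prime] {ι : Type*} [Finite ι]
    (x : ι → ℚ_[p]) (hx : x ≠ 0) :
    ∃ t : ℚ_[p], ∃ y : ι → ℤ_[p], (∃ j, IsUnit (y j)) ∧ ∀ i, (y i : ℚ_[p]) = x i * t := by
  obtain ⟨j, hj⟩ := Function.ne_iff.mp hx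
  have : Nonempty ι := ⟨j⟩
  obtain ⟨m, hm⟩ := Finite.exists_max fun i => ‖x i‖
  have hxm : 0 < ‖x m‖ := (norm_pos_iff.mpr hj).trans_le (hm j)
  have hy (i) : ‖x i * (x m)⁻¹‖ ≤ 1 := by
    rw [norm_mul, norm_inv, mul_inv_le_iff₀ hxm, one_mul]
    exact hm i
  refine ⟨(x m)⁻¹, fun i => (⟨_, hy i⟩ : ℤ_[p]), ⟨m, PadicInt.isUnit_iff.mpr ?_⟩, fun i => rfl⟩
  change ‖x m * (x m)⁻¹‖ = 1
  rw [mul_inv_cancel₀ (norm_pos_iff.mp hxm), norm_one]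

theorem not_isC2Field_padic_two : ¬ IsC2Field ℚ_[2] := by
  intro hC2
  obtain ⟨x, hx, hFx⟩ :=
    hC2 17 4 (terjanianPoly ℚ_[2]) (isHomogeneous_terjanianPoly _) (by norm_num) (by norm_num)
  obtain ⟨t, y, ⟨j, hj⟩, hy⟩ := PadicInt.exists_primitive_mul_of_ne_zero x hx
  set e : Fin 6 × Fin 3 ≃ Fin 18 := finProdFinEquiv
  have hFy : terjanianF (fun k i => y (e (k, i))) = 0 := by
    apply Subtype.coe_injective
    calc PadicInt.Coe.ringHom (terjanianF fun k i => y (e (k, i)))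
        = terjanianF (fun k i => x (e (k, i)) * t) := by simp only [map_terjanianF, ← hy]; rfl
      _ = 0 := by rw [terjanianF_mul_const, ← eval_terjanianPoly, hFx, zero_mul]
  set W : Fin 6 → Fin 3 → ZMod 16 := fun k i => PadicInt.toZModPow 4 (y (e (k, i)))
  have hW := two_dvd_of_terjanianF_eq_zero W (by rw [← map_terjanianF, hFy, map_zero])
  have hunit : IsUnit (W (e.symm j).1 (e.symm j).2) := by
    simpa [W] using hj.map (PadicInt.toZModPow 4)
  have h2 : ¬ IsUnit (2 : ZMod 16) := by
    exact_mod_cast (ZMod.isUnit_prime_iff_not_dvd Nat.prime_two).not.mpr (by norm_num)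
  exact h2 (isUnit_of_dvd_unit (hW _ _) hunit)

/-- Terjanian's 18-variable quartic `G(x) + G(y) + G(z) + 4G(u) + 4G(v) + 4G(w)` has no
zero modulo `16` with not all coordinates divisible by `2`; consequently `ℚ₂` is not `C₂`. -/
theorem terjanian_no_primitive_zero_mod_sixteen :
    (¬ ∃ x y z u v w : Fin 3 → ZMod 16,
      (¬ (∀ a ∈ ({x, y, z, u, v, w} : Set (Fin 3 → ZMod 16)), ∀ i : Fin 3, ∃ c, a i = 2 * c)) ∧
      terjanianG x + terjanianG y + terjanianG z
        + 4 * (terjanianG u + terjanianG v + terjanianG w) = 0) ∧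
    ¬ IsC2Field ℚ_[2] := by
  refine ⟨?_, not_isC2Field_padic_two⟩
  rintro ⟨x, y, z, u, v, w, hprim, h⟩
  have heven := two_dvd_of_terjanianF_eq_zero ![x, y, z, u, v, w] h
  refine hprim fun a ha => ?_
  rcases ha with rfl | rfl | rfl | rfl | rfl | rfl
  exacts [heven 0, heven 1, heven 2, heven 3, heven 4, heven 5]
end

section
/- Let (K_0, v_0) be a valued field with residue field k_0, let f ∈ k_0[X] be a monic irreducible separable polynomial, and let F ∈ O_{K_0}[X] be a monic lift of f. Then F is irreducible over K_0, and for any root a of F in an algebraic closure, the valuation v_0 extends uniquely to K_0(a); the resulting extension has the same value group as K_0 and residue field k_0[X]/(f). -/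
/-!
Write `O` for the valuation ring of `v₀`. Since `F` is monic with irreducible reduction `f`, it is
irreducible over `O`, hence over `K₀` by Gauss's lemma (`O` is integrally closed).

Every nonzero `p ∈ K₀[X]` is `c • r` with `v₀ c` the largest valuation of a coefficient of `p` and
`r ∈ O[X]` primitive, i.e. with nonzero reduction `r̄`. If `deg p < deg F`, then `deg r̄ < deg f`,
so for primitive `r, s` of this kind `r̄ s̄` is nonzero modulo the irreducible `f`: `(r s) mod F`
is again primitive. Hence the Gauss valuation of reduced representatives is a valuation on
`K₀[X]/(F) ≅ K₀(a)` extending `v₀`.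

Conversely, let `w` be any extension. Then `a` is integral over `O`, so lies in the valuation ring
of `w`, and reduction gives `k₀[X]/(f) → k_w`, `X ↦ ā`, injective as `f` is irreducible. For
primitive `r` with `deg r̄ < deg f` the residue of `r(a)` is `r̄(ā) ≠ 0`, so `w (r(a)) = 1` and
`w (p(a))` is the Gauss valuation of `p`. This pins down `w`, shows that each of its values is a
value of `v₀`, and (as `w (p(a)) ≤ 1` forces `p ∈ O[X]`) makes `k₀[X]/(f) → k_w` surjective.
-/

open IsLocalRing Polynomial

/-- The value group of a valuation `w` on a field `E`, as a subgroup of `Γˣ`. -/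
def valueGroupOf {Γ : Type*} [LinearOrderedCommGroupWithZero Γ] {E : Type*} [Field E]
    (w : Valuation E Γ) : Subgroup Γˣ :=
  (Units.map (w.toMonoidWithZeroHom.toMonoidHom)).range

theorem Polynomial.mul_modByMonic_ne_zero {k : Type*} [Field k] {f a b : k[X]}
    (hf : f.Monic) (hirr : Irreducible f) (ha : a ≠ 0) (hb : b ≠ 0)
    (hda : a.degree < f.degree) (hdb : b.degree < f.degree) : (a * b) %ₘ f ≠ 0 := by
  rw [Ne, modByMonic_eq_zero_iff_dvd hf]
  rintro (h : f ∣ a * b)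
  rcases hirr.prime.dvd_or_dvd h with h | h
  exacts [ha (eq_zero_of_dvd_of_degree_lt h hda), hb (eq_zero_of_dvd_of_degree_lt h hdb)]

theorem AdjoinRoot.degree_modByMonicHom_lt {R : Type*} [CommRing R] [Nontrivial R]
    {g : R[X]} (hg : g.Monic) (x : AdjoinRoot g) :
    (AdjoinRoot.modByMonicHom hg x).degree < g.degree := by
  obtain ⟨p, rfl⟩ := AdjoinRoot.mk_surjective x
  rw [AdjoinRoot.modByMonicHom_mk]
  exact degree_modByMonic_lt p hg

theorem Polynomial.exists_degree_lt_aeval_eq {R S : Type*} [CommRing R] [Nontrivial R]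
    [Ring S] [Algebra R S] {g : R[X]} (hg : g.Monic) {x : S} (hx : aeval x g = 0)
    (hgen : Function.Surjective (aeval (R := R) x)) (y : S) :
    ∃ p : R[X], p.degree < g.degree ∧ aeval x p = y := by
  obtain ⟨q, rfl⟩ := hgen y
  exact ⟨q %ₘ g, degree_modByMonic_lt q hg, aeval_modByMonic_eq_self_of_root hx⟩

theorem IntermediateField.AdjoinSimple.surjective_aeval_gen {F E : Type*} [Field F] [Field E]
    [Algebra F E] {a : E} (h : IsIntegral F a) :
    Function.Surjective (aeval (R := F) (AdjoinSimple.gen F a)) := by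
  intro x
  obtain ⟨y, rfl⟩ := (adjoinRootEquivAdjoin F h).surjective x
  obtain ⟨p, rfl⟩ := AdjoinRoot.mk_surjective y
  refine ⟨p, ?_⟩
  rw [← AdjoinRoot.aeval_eq, ← aeval_algHom_apply, adjoinRootEquivAdjoin_apply_root]

namespace Valuation

variable {Γ : Type*} [LinearOrderedCommGroupWithZero Γ]

section CommRing

variable {R : Type*} [CommRing R] (v : Valuation R Γ)

def gaussSup (p : R[X]) : Γ :=
  p.support.sup fun i => v (p.coeff i)

theorem le_gaussSup (p : R[X]) (i : ℕ) : v (p.coeff i) ≤ v.gaussSup p := by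
  by_cases hi : p.coeff i = 0
  · simp [hi]
  · exact Finset.le_sup (f := fun j => v (p.coeff j)) (mem_support_iff.2 hi)

theorem gaussSup_le_iff {p : R[X]} {γ : Γ} :
    v.gaussSup p ≤ γ ↔ ∀ i, v (p.coeff i) ≤ γ :=
  ⟨fun h i => (v.le_gaussSup p i).trans h, fun h => Finset.sup_le fun i _ => h i⟩

theorem exists_gaussSup_eq (p : R[X]) : ∃ i, v.gaussSup p = v (p.coeff i) := by
  rcases p.support.eq_empty_or_nonempty with h | h
  · exact ⟨0, by simp [gaussSup, support_eq_empty.1 h, bot_eq_zero]⟩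
  · obtain ⟨i, -, hi⟩ := Finset.exists_mem_eq_sup _ h fun i => v (p.coeff i)
    exact ⟨i, hi⟩

@[simp]
theorem gaussSup_zero : v.gaussSup 0 = 0 := by
  simp [gaussSup, bot_eq_zero]

theorem gaussSup_C (c : R) : v.gaussSup (C c) = v c :=
  le_antisymm ((v.gaussSup_le_iff).2 fun i => by
      rcases eq_or_ne i 0 with rfl | hi <;> simp [coeff_C, *])
    (by simpa using v.le_gaussSup (C c) 0)

theorem gaussSup_C_mul (c : R) (p : R[X]) : v.gaussSup (C c * p) = v c * v.gaussSup p := by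
  obtain ⟨i, hi⟩ := v.exists_gaussSup_eq p
  refine le_antisymm ((v.gaussSup_le_iff).2 fun j => ?_) ?_
  · rw [coeff_C_mul, map_mul]
    exact mul_le_mul_right (v.le_gaussSup p j) _
  · simpa [hi] using v.le_gaussSup (C c * p) i

theorem gaussSup_add_le (p q : R[X]) :
    v.gaussSup (p + q) ≤ max (v.gaussSup p) (v.gaussSup q) :=
  (v.gaussSup_le_iff).2 fun i => (coeff_add p q i ▸ v.map_add _ _).trans
    (max_le_max (v.le_gaussSup p i) (v.le_gaussSup q i))

end CommRing

section Field

variable {K : Type*} [Field K] (v : Valuation K Γ)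

theorem valuation_eq_one_iff_residue_ne_zero (x : v.valuationSubring) :
    v x = 1 ↔ residue v.valuationSubring x ≠ 0 := by
  rw [Ne, residue_eq_zero_iff, mem_maximalIdeal, mem_nonunits_iff, not_not,
    (valuationSubring.integers v).isUnit_iff_valuation_eq_one]
  rfl

theorem gaussSup_map_le_one (r : v.valuationSubring[X]) :
    v.gaussSup (r.map (algebraMap _ K)) ≤ 1 :=
  (v.gaussSup_le_iff).2 fun i => by rw [coeff_map]; exact (r.coeff i).2

theorem gaussSup_map_eq_one_iff (r : v.valuationSubring[X]) :
    v.gaussSup (r.map (algebraMap _ K)) = 1 ↔ r.map (residue _) ≠ 0 := by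
  constructor
  · intro h h0
    obtain ⟨i, hi⟩ := v.exists_gaussSup_eq (r.map (algebraMap _ K))
    rw [h, coeff_map] at hi
    exact (v.valuation_eq_one_iff_residue_ne_zero _).1 hi.symm
      (by simpa using congrArg (coeff · i) h0)
  · intro h
    obtain ⟨j, hj⟩ : ∃ j, residue _ (r.coeff j) ≠ 0 := by
      by_contra! h0
      exact h (Polynomial.ext fun j => by simpa using h0 j)
    refine le_antisymm (v.gaussSup_map_le_one r) ?_
    calc 1 = v (r.coeff j) := ((v.valuation_eq_one_iff_residue_ne_zero _).2 hj).symm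
      _ ≤ _ := by simpa using v.le_gaussSup (r.map (algebraMap _ K)) j

theorem exists_map_eq_of_gaussSup_le_one {p : K[X]} (h : v.gaussSup p ≤ 1) :
    ∃ r : v.valuationSubring[X], r.map (algebraMap _ K) = p :=
  (lifts_iff_coeff_lifts p).2 fun n => ⟨⟨p.coeff n, (v.le_gaussSup p n).trans h⟩, rfl⟩

theorem exists_eq_C_mul_map {p : K[X]} (hp : p ≠ 0) :
    ∃ (c : K) (r : v.valuationSubring[X]), p = C c * r.map (algebraMap _ K) ∧
      r.map (residue _) ≠ 0 ∧ (r.map (residue _)).degree ≤ p.degree ∧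
        v c = v.gaussSup p := by
  obtain ⟨i, hi⟩ := v.exists_gaussSup_eq p
  have hc : p.coeff i ≠ 0 := by
    refine fun h0 => hp (Polynomial.ext fun j => ?_)
    have := (v.gaussSup_le_iff).1 (by rw [hi, h0, map_zero]) j
    simpa using this
  obtain ⟨r, hr⟩ := v.exists_map_eq_of_gaussSup_le_one (p := C (p.coeff i)⁻¹ * p)
    (by rw [gaussSup_C_mul, hi, map_inv₀, inv_mul_cancel₀ (v.ne_zero_iff.2 hc)])
  have hp_eq : p = C (p.coeff i) * r.map (algebraMap _ K) := by
    rw [hr, ← mul_assoc, ← C_mul, mul_inv_cancel₀ hc, C_1, one_mul]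
  refine ⟨p.coeff i, r, hp_eq, (v.gaussSup_map_eq_one_iff r).1 ?_, ?_, hi.symm⟩
  · rw [hr, gaussSup_C_mul, hi, map_inv₀, inv_mul_cancel₀ (v.ne_zero_iff.2 hc)]
  · calc (r.map (residue _)).degree ≤ r.degree := degree_map_le
      _ = p.degree := by
        rw [hp_eq, degree_C_mul hc,
          degree_map_eq_of_injective (FaithfulSMul.algebraMap_injective _ _)]

end Field

section MonicLift

variable {K : Type*} [Field K] {v : Valuation K Γ} {F : v.valuationSubring[X]}

theorem gaussSup_mul_modByMonic (hF : F.Monic) (hirr : Irreducible (F.map (residue _)))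
    {p q : K[X]} (hp : p.degree < F.degree) (hq : q.degree < F.degree) :
    v.gaussSup ((p * q) %ₘ F.map (algebraMap _ K)) = v.gaussSup p * v.gaussSup q := by
  rcases eq_or_ne p 0 with rfl | hp0
  · simp
  rcases eq_or_ne q 0 with rfl | hq0
  · simp
  obtain ⟨c, r, rfl, hr, hrp, hc⟩ := v.exists_eq_C_mul_map hp0
  obtain ⟨d, s, rfl, hs, hsq, hd⟩ := v.exists_eq_C_mul_map hq0
  have hFdeg : (F.map (residue _)).degree = F.degree := hF.degree_map _
  have hrs : ((r * s) %ₘ F).map (residue _) ≠ 0 := by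
    rw [map_modByMonic _ hF, Polynomial.map_mul]
    exact mul_modByMonic_ne_zero (hF.map _) hirr hr hs (hFdeg ▸ hrp.trans_lt hp)
      (hFdeg ▸ hsq.trans_lt hq)
  have hmod : (C c * r.map (algebraMap _ K) * (C d * s.map (algebraMap _ K))) %ₘ
      F.map (algebraMap _ K) = C (c * d) * ((r * s) %ₘ F).map (algebraMap _ K) := by
    have hprod : C c * r.map (algebraMap _ K) * (C d * s.map (algebraMap _ K)) =
        (c * d) • (r * s).map (algebraMap _ K) := by
      rw [smul_eq_C_mul, C_mul, Polynomial.map_mul]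
      ring
    rw [hprod, smul_modByMonic, map_modByMonic _ hF, smul_eq_C_mul]
  rw [hmod, gaussSup_C_mul, (v.gaussSup_map_eq_one_iff _).2 hrs, ← hc, ← hd, map_mul, mul_one]

theorem C_modByMonic_map_algebraMap (hF : F.Monic) (hirr : Irreducible (F.map (residue _)))
    (c : K) : C c %ₘ F.map (algebraMap _ K) = C c := by
  refine (modByMonic_eq_self_iff (hF.map _)).2 (degree_C_le.trans_lt ?_)
  rw [hF.degree_map, ← hF.degree_map (residue _)]
  exact degree_pos_of_irreducible hirr

noncomputable def gaussExtension (hF : F.Monic) (hirr : Irreducible (F.map (residue _))) :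
    Valuation (AdjoinRoot (F.map (algebraMap _ K))) Γ where
  toFun x := v.gaussSup (AdjoinRoot.modByMonicHom (hF.map _) x)
  map_zero' := by simp
  map_one' := by
    rw [← map_one (AdjoinRoot.mk _), ← C_1, AdjoinRoot.modByMonicHom_mk,
      C_modByMonic_map_algebraMap hF hirr, gaussSup_C, map_one]
  map_mul' x y := by
    have hdeg := hF.degree_map (algebraMap _ K)
    conv_lhs => rw [← AdjoinRoot.mk_leftInverse (hF.map _) x,
      ← AdjoinRoot.mk_leftInverse (hF.map _) y, ← map_mul, AdjoinRoot.modByMonicHom_mk]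
    exact gaussSup_mul_modByMonic hF hirr (hdeg ▸ AdjoinRoot.degree_modByMonicHom_lt _ x)
      (hdeg ▸ AdjoinRoot.degree_modByMonicHom_lt _ y)
  map_add_le_max' x y := by simpa only [map_add] using v.gaussSup_add_le _ _

theorem gaussExtension_comap (hF : F.Monic) (hirr : Irreducible (F.map (residue _))) :
    (gaussExtension hF hirr).comap (algebraMap K _) = v := by
  ext c
  show v.gaussSup (AdjoinRoot.modByMonicHom _ (AdjoinRoot.mk _ (C c))) = v c
  rw [AdjoinRoot.modByMonicHom_mk, C_modByMonic_map_algebraMap hF hirr, gaussSup_C]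

theorem irreducible_map_algebraMap (hF : F.Monic) (hirr : Irreducible (F.map (residue _))) :
    Irreducible (F.map (algebraMap _ K)) :=
  hF.irreducible_iff_irreducible_map_fraction_map.1 (hF.irreducible_of_irreducible_map _ _ hirr)

section Extension

variable {L : Type*} [Field L] [Algebra K L] {w : Valuation L Γ} {α : L}

theorem exists_isLocalHom_valuationSubring (hw : w.comap (algebraMap K L) = v) :
    ∃ ψ : v.valuationSubring →+* w.valuationSubring, IsLocalHom ψ ∧
      (algebraMap _ L).comp ψ = (algebraMap K L).comp (algebraMap _ K) := by
  subst hw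
  refine ⟨((algebraMap K L).comp (algebraMap _ K)).codRestrict _ fun c => c.2,
    ⟨fun c hc => ?_⟩, rfl⟩
  rw [(valuationSubring.integers _).isUnit_iff_valuation_eq_one] at hc ⊢
  exact hc

theorem exists_adjoinRoot_hom_residueField (hw : w.comap (algebraMap K L) = v) (hF : F.Monic)
    (hα : aeval α (F.map (algebraMap _ K)) = 0) :
    ∃ Φ : AdjoinRoot (F.map (residue _)) →+* ResidueField w.valuationSubring,
      ∀ r : v.valuationSubring[X], ∃ y : w.valuationSubring,
        (y : L) = aeval α (r.map (algebraMap _ K)) ∧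
          Φ (AdjoinRoot.mk _ (r.map (residue _))) = residue _ y := by
  obtain ⟨ψ, hψ, hcomp⟩ := exists_isLocalHom_valuationSubring hw
  have hcoe (β : w.valuationSubring) (r : v.valuationSubring[X]) :
      ((r.eval₂ ψ β : w.valuationSubring) : L) = aeval (β : L) (r.map (algebraMap _ K)) := by
    rw [aeval_def, eval₂_map, ← hcomp]
    exact hom_eval₂ r ψ (algebraMap _ L) β
  have hαint : α ∈ w.valuationSubring := (valuationSubring.integers w).mem_of_integral
    ⟨F.map ψ, hF.map ψ, by rw [eval₂_map, hcomp, ← eval₂_map, ← aeval_def, hα]⟩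
  set β : w.valuationSubring := ⟨α, hαint⟩
  have hres (r : v.valuationSubring[X]) : residue _ (r.eval₂ ψ β) =
      (r.map (residue _)).eval₂ (ResidueField.map ψ) (residue _ β) := by
    rw [hom_eval₂, eval₂_map, ResidueField.map_comp_residue]
  have hroot : (F.map (residue _)).eval₂ (ResidueField.map ψ) (residue _ β) = 0 := by
    rw [← hres, show F.eval₂ ψ β = 0 from Subtype.ext ((hcoe β F).trans hα), map_zero]
  refine ⟨AdjoinRoot.lift (ResidueField.map ψ) (residue _ β) hroot,
    fun r => ⟨r.eval₂ ψ β, hcoe β r, ?_⟩⟩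
  rw [AdjoinRoot.lift_mk, hres]

theorem valuation_aeval_map_eq_one (hw : w.comap (algebraMap K L) = v) (hF : F.Monic)
    (hirr : Irreducible (F.map (residue _))) (hα : aeval α (F.map (algebraMap _ K)) = 0)
    {r : v.valuationSubring[X]} (hr : r.map (residue _) ≠ 0)
    (hdeg : (r.map (residue _)).degree < F.degree) :
    w (aeval α (r.map (algebraMap _ K))) = 1 := by
  obtain ⟨Φ, hΦ⟩ := exists_adjoinRoot_hom_residueField hw hF hα
  obtain ⟨y, hy, hΦy⟩ := hΦ r
  have := Fact.mk hirr
  have hmk : AdjoinRoot.mk (F.map (residue _)) (r.map (residue _)) ≠ 0 := fun h =>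
    hr (eq_zero_of_dvd_of_degree_lt (AdjoinRoot.mk_eq_zero.1 h) (by rwa [hF.degree_map]))
  rw [← hy, w.valuation_eq_one_iff_residue_ne_zero, ← hΦy]
  exact (map_ne_zero Φ).2 hmk

theorem valuation_aeval_eq_gaussSup (hw : w.comap (algebraMap K L) = v) (hF : F.Monic)
    (hirr : Irreducible (F.map (residue _))) (hα : aeval α (F.map (algebraMap _ K)) = 0)
    {p : K[X]} (hp : p.degree < F.degree) :
    w (aeval α p) = v.gaussSup p := by
  rcases eq_or_ne p 0 with rfl | hp0
  · simp
  obtain ⟨c, r, rfl, hr, hrp, hc⟩ := v.exists_eq_C_mul_map hp0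
  rw [map_mul, aeval_C, map_mul, valuation_aeval_map_eq_one hw hF hirr hα hr (hrp.trans_lt hp),
    mul_one, ← hc, ← hw, comap_apply]

theorem exists_comap_eq (hF : F.Monic) (hirr : Irreducible (F.map (residue _)))
    (hα : aeval α (F.map (algebraMap _ K)) = 0) (hgen : Function.Surjective (aeval (R := K) α)) :
    ∃ w : Valuation L Γ, w.comap (algebraMap K L) = v := by
  have := Fact.mk (irreducible_map_algebraMap hF hirr)
  let φ := AdjoinRoot.liftAlgHom _ (Algebra.ofId K L) α hα
  have hφ : Function.Bijective φ := ⟨φ.injective, fun x => by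
    obtain ⟨p, rfl⟩ := hgen x
    exact ⟨AdjoinRoot.mk _ p, AdjoinRoot.liftAlgHom_mk _ _ _ _ _⟩⟩
  let e := AlgEquiv.ofBijective φ hφ
  refine ⟨(gaussExtension hF hirr).comap (e.symm : L →+* _), ?_⟩
  ext c
  show gaussExtension hF hirr (e.symm (algebraMap K L c)) = v c
  rw [e.symm.commutes, ← comap_apply, gaussExtension_comap]

theorem eq_of_comap_eq (hF : F.Monic) (hirr : Irreducible (F.map (residue _)))
    (hα : aeval α (F.map (algebraMap _ K)) = 0) (hgen : Function.Surjective (aeval (R := K) α))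
    {w₁ w₂ : Valuation L Γ} (h₁ : w₁.comap (algebraMap K L) = v)
    (h₂ : w₂.comap (algebraMap K L) = v) : w₁ = w₂ := by
  ext x
  obtain ⟨p, hp, rfl⟩ := exists_degree_lt_aeval_eq (hF.map _) hα hgen x
  rw [hF.degree_map] at hp
  rw [valuation_aeval_eq_gaussSup h₁ hF hirr hα hp,
    valuation_aeval_eq_gaussSup h₂ hF hirr hα hp]

theorem valueGroupOf_eq_of_comap_eq (hw : w.comap (algebraMap K L) = v)
    (h : ∀ x, ∃ c, w x = v c) : valueGroupOf w = valueGroupOf v := by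
  ext γ
  constructor
  · rintro ⟨u, rfl⟩
    obtain ⟨c, hc⟩ := h u
    have hc0 : c ≠ 0 := by
      rw [← v.ne_zero_iff, ← hc]
      exact w.ne_zero_iff.2 u.ne_zero
    exact ⟨Units.mk0 c hc0, Units.ext hc.symm⟩
  · rintro ⟨u, rfl⟩
    exact ⟨Units.map (algebraMap K L) u, Units.ext (by simp [← hw])⟩

theorem valueGroupOf_eq (hw : w.comap (algebraMap K L) = v) (hF : F.Monic)
    (hirr : Irreducible (F.map (residue _))) (hα : aeval α (F.map (algebraMap _ K)) = 0)
    (hgen : Function.Surjective (aeval (R := K) α)) : valueGroupOf w = valueGroupOf v := by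
  refine valueGroupOf_eq_of_comap_eq hw fun x => ?_
  obtain ⟨p, hp, rfl⟩ := exists_degree_lt_aeval_eq (hF.map _) hα hgen x
  obtain ⟨i, hi⟩ := v.exists_gaussSup_eq p
  rw [hF.degree_map] at hp
  exact ⟨p.coeff i, (valuation_aeval_eq_gaussSup hw hF hirr hα hp).trans hi⟩

theorem nonempty_residueField_ringEquiv (hw : w.comap (algebraMap K L) = v) (hF : F.Monic)
    (hirr : Irreducible (F.map (residue _))) (hα : aeval α (F.map (algebraMap _ K)) = 0)
    (hgen : Function.Surjective (aeval (R := K) α)) :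
    Nonempty (ResidueField w.valuationSubring ≃+* AdjoinRoot (F.map (residue _))) := by
  obtain ⟨Φ, hΦ⟩ := exists_adjoinRoot_hom_residueField hw hF hα
  have := Fact.mk hirr
  refine ⟨(RingEquiv.ofBijective Φ ⟨Φ.injective, fun z => ?_⟩).symm⟩
  obtain ⟨t, rfl⟩ := residue_surjective z
  obtain ⟨p, hp, ht⟩ := exists_degree_lt_aeval_eq (hF.map _) hα hgen t
  rw [hF.degree_map] at hp
  obtain ⟨r, rfl⟩ := v.exists_map_eq_of_gaussSup_le_one
    (by rw [← valuation_aeval_eq_gaussSup hw hF hirr hα hp, ht]; exact t.2)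
  obtain ⟨y, hy, hΦy⟩ := hΦ r
  exact ⟨_, hΦy.trans (congrArg _ (Subtype.ext (hy.trans ht)))⟩

end Extension

end MonicLift

end Valuation

theorem extension_of_unramified_residue_polynomial_general
    {Γ : Type*} [LinearOrderedCommGroupWithZero Γ] (K₀ : Type*) [Field K₀]
    (v₀ : Valuation K₀ Γ)
    (f : Polynomial (ResidueField v₀.valuationSubring))
    (hf_irr : Irreducible f)
    (F : Polynomial v₀.valuationSubring) (hF_monic : F.Monic)
    (hF_lift : F.map (residue v₀.valuationSubring) = f)
    (a : AlgebraicClosure K₀)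
    (ha : Polynomial.aeval a (F.map (algebraMap v₀.valuationSubring K₀)) = 0) :
    Irreducible (F.map (algebraMap v₀.valuationSubring K₀)) ∧
    ∃ w : Valuation (IntermediateField.adjoin K₀ {a} : IntermediateField K₀ (AlgebraicClosure K₀)) Γ,
      w.comap (algebraMap K₀ _) = v₀ ∧
      (∀ w' : Valuation (IntermediateField.adjoin K₀ {a} :
          IntermediateField K₀ (AlgebraicClosure K₀)) Γ,
        w'.comap (algebraMap K₀ _) = v₀ → w' = w) ∧
      valueGroupOf w = valueGroupOf v₀ ∧
      Nonempty (ResidueField w.valuationSubring ≃+* AdjoinRoot f) := by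
  subst hF_lift
  set α := IntermediateField.AdjoinSimple.gen K₀ a
  have hα : aeval α (F.map (algebraMap _ K₀)) = 0 :=
    Subtype.ext ((IntermediateField.AdjoinSimple.coe_aeval_gen_apply K₀ a _).trans ha)
  have hgen := IntermediateField.AdjoinSimple.surjective_aeval_gen
    (Algebra.IsIntegral.isIntegral (R := K₀) a)
  obtain ⟨w, hw⟩ := Valuation.exists_comap_eq hF_monic hf_irr hα hgen
  exact ⟨Valuation.irreducible_map_algebraMap hF_monic hf_irr, w, hw,
    fun w' hw' => Valuation.eq_of_comap_eq hF_monic hf_irr hα hgen hw' hw,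
    Valuation.valueGroupOf_eq hw hF_monic hf_irr hα hgen,
    Valuation.nonempty_residueField_ringEquiv hw hF_monic hf_irr hα hgen⟩

/-- Let `(K₀, v₀)` be a valued field with residue field `k₀`, let `f ∈ k₀[X]` be monic,
irreducible and separable, and let `F ∈ O_{K₀}[X]` be a monic lift of `f`. Then `F` is
irreducible over `K₀` and, for any root `a` of `F` in an algebraic closure, the valuation
`v₀` extends uniquely to `K₀(a)`; the extension has the same value group as `v₀` and
residue field `k₀[X]/(f)`. -/
theorem extension_of_unramified_residue_polynomial
    {Γ : Type*} [LinearOrderedCommGroupWithZero Γ] (K₀ : Type*) [Field K₀]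
    (v₀ : Valuation K₀ Γ)
    (f : Polynomial (ResidueField v₀.valuationSubring))
    (hf_monic : f.Monic) (hf_irr : Irreducible f) (hf_sep : f.Separable)
    (F : Polynomial v₀.valuationSubring) (hF_monic : F.Monic)
    (hF_lift : F.map (residue v₀.valuationSubring) = f)
    (a : AlgebraicClosure K₀)
    (ha : Polynomial.aeval a (F.map (algebraMap v₀.valuationSubring K₀)) = 0) :
    Irreducible (F.map (algebraMap v₀.valuationSubring K₀)) ∧
    ∃ w : Valuation (IntermediateField.adjoin K₀ {a} : IntermediateField K₀ (AlgebraicClosure K₀)) Γ,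
      w.comap (algebraMap K₀ _) = v₀ ∧
      (∀ w' : Valuation (IntermediateField.adjoin K₀ {a} :
          IntermediateField K₀ (AlgebraicClosure K₀)) Γ,
        w'.comap (algebraMap K₀ _) = v₀ → w' = w) ∧
      valueGroupOf w = valueGroupOf v₀ ∧
      Nonempty (ResidueField w.valuationSubring ≃+* AdjoinRoot f) :=
  extension_of_unramified_residue_polynomial_general K₀ v₀ f hf_irr F hF_monic hF_lift a ha
end

section
/- Let (K_0,v_0) be a valued field with value group Γ_0, let p be a prime, and let γ ∈ Γ ⊇ Γ_0 with γ ∉ Γ_0 but pγ ∈ Γ_0. Choose b_0 ∈ K_0 with v_0(b_0) = pγ and let b be a root of X^p − b_0. Then X^p − b_0 is irreducible over K_0, v_0 extends uniquely to K_0(b), the value group of the extension is Γ_0 + Zγ, and the residue field is unchanged. -/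
/-!
Every `x ∈ K₀(b)` is uniquely `∑_{i<p} aᵢ bⁱ`. Since `γ` has order `p` modulo `Γ₀`, the values
`v₀(aᵢ) γⁱ` of the nonzero terms lie in distinct cosets of `Γ₀`, so one term strictly dominates.
Hence `x ↦ maxᵢ v₀(aᵢ) γⁱ` is multiplicative (the product of the dominant terms dominates `x y`):
it is a valuation extending `v₀`. Any extension `w` has `w b = γ` because `(w b)ᵖ = v₀ b₀ = γᵖ`,
so `w` is bounded by this valuation term by term, and a valuation on a field bounded by another
one equals it. The value group and the residue field are read off the dominant term: if
`w x ≤ 1` then `w (x - a₀) < 1`, because `v₀(aᵢ) γⁱ ≠ 1` for `0 < i < p`.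
-/

open IsLocalRing Polynomial

theorem Subgroup.pow_notMem_of_lt_prime {G : Type*} [Group G] {H : Subgroup G} {p : ℕ}
    (hp : p.Prime) {g : G} (hg : g ∉ H) (hgp : g ^ p ∈ H) {i : ℕ} (hi₀ : 0 < i) (hip : i < p) :
    g ^ i ∉ H := by
  intro hgi
  have hcop : i.gcd p = 1 :=
    Nat.Coprime.symm ((hp.coprime_iff_not_dvd).mpr (Nat.not_dvd_of_pos_of_lt hi₀ hip))
  have hbezout : g = (g ^ i) ^ i.gcdA p * (g ^ p) ^ i.gcdB p := by
    rw [← zpow_natCast, ← zpow_natCast, ← zpow_mul, ← zpow_mul, ← zpow_add, ← Nat.gcd_eq_gcd_ab,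
      hcop, Nat.cast_one, zpow_one]
  exact hg (hbezout ▸ mul_mem (zpow_mem hgi _) (zpow_mem hgp _))

theorem mem_valueGroupOf_iff {Γ K : Type*} [LinearOrderedCommGroupWithZero Γ] [Field K]
    (v : Valuation K Γ) {d : Γˣ} : d ∈ valueGroupOf v ↔ ∃ a : K, a ≠ 0 ∧ v a = d := by
  constructor
  · rintro ⟨u, rfl⟩
    exact ⟨u, u.ne_zero, rfl⟩
  · rintro ⟨a, ha, hva⟩
    exact ⟨Units.mk0 a ha, Units.ext hva⟩

theorem irreducible_X_pow_sub_C_of_notMem_valueGroupOf {Γ K : Type*}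
    [LinearOrderedCommGroupWithZero Γ] [Field K] (v : Valuation K Γ) {p : ℕ} (hp : p.Prime)
    {γ : Γˣ} (hγ : γ ∉ valueGroupOf v) {b₀ : K} (hb₀ : v b₀ = (γ : Γ) ^ p) :
    Irreducible (X ^ p - C b₀) := by
  refine X_pow_sub_C_irreducible_of_prime hp fun a ha => hγ ?_
  have ha0 : a ≠ 0 := by
    rintro rfl
    rw [← ha, zero_pow hp.ne_zero, map_zero] at hb₀
    exact pow_ne_zero p γ.ne_zero hb₀.symm
  refine (mem_valueGroupOf_iff v).mpr ⟨a, ha0, (pow_left_inj₀ zero_le zero_le hp.ne_zero).mp ?_⟩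
  rw [← map_pow, ha, hb₀]

theorem Valuation.eq_of_forall_le {Γ K : Type*} [LinearOrderedCommGroupWithZero Γ] [Field K]
    {v w : Valuation K Γ} (h : ∀ x, v x ≤ w x) : v = w := by
  refine Valuation.ext fun x => (h x).antisymm ?_
  rcases eq_or_ne x 0 with rfl | hx
  · simp
  have hvx : 0 < v x⁻¹ := by simpa [zero_lt_iff] using hx
  calc w x = (w x⁻¹)⁻¹ := by rw [map_inv₀, inv_inv]
    _ ≤ (v x⁻¹)⁻¹ := inv_anti₀ hvx (h x⁻¹)
    _ = v x := by rw [map_inv₀, inv_inv]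

theorem Valuation.HasExtension.of_comap_eq {K L Γ : Type*} [CommRing K] [Ring L] [Algebra K L]
    [LinearOrderedCommMonoidWithZero Γ] {v : Valuation K Γ} {w : Valuation L Γ}
    (h : w.comap (algebraMap K L) = v) : v.HasExtension w :=
  ⟨h ▸ Valuation.IsEquiv.refl⟩

theorem Valuation.HasExtension.bijective_algebraMap_residueField {K L Γ₀ Γ₁ : Type*} [Field K]
    [Field L] [Algebra K L] [LinearOrderedCommGroupWithZero Γ₀]
    [LinearOrderedCommGroupWithZero Γ₁] (v : Valuation K Γ₀) (w : Valuation L Γ₁)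
    [v.HasExtension w] (h : ∀ y, w y ≤ 1 → ∃ a : K, w (y - algebraMap K L a) < 1) :
    Function.Bijective
      (algebraMap (ResidueField v.valuationSubring) (ResidueField w.valuationSubring)) := by
  refine ⟨RingHom.injective _, fun z => ?_⟩
  obtain ⟨y, rfl⟩ := IsLocalRing.residue_surjective z
  obtain ⟨a, ha⟩ := h y y.2
  have ha1 : v a ≤ 1 := by
    rw [← HasExtension.val_map_le_one_iff v w]
    simpa using w.map_sub_le y.2 ha.le
  refine ⟨IsLocalRing.residue _ ⟨a, (v.mem_valuationSubring_iff a).mpr ha1⟩, ?_⟩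
  rw [HasExtension.algebraMap_residue_eq_residue_algebraMap, eq_comm, ← sub_eq_zero,
    ← _root_.map_sub, IsLocalRing.residue_eq_zero_iff, Valuation.mem_maximalIdeal_iff]
  exact ha

namespace PowerBasis

variable {Γ K L : Type*} [LinearOrderedCommGroupWithZero Γ] [Field K] [Field L] [Algebra K L]

section GaussSup

variable (pb : PowerBasis K L) (v : Valuation K Γ) (γ : Γˣ)

noncomputable def gaussSup (x : L) : Γ :=
  Finset.univ.sup fun i : Fin pb.dim => v (pb.basis.repr x i) * (γ : Γ) ^ (i : ℕ)

variable {pb v γ}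

theorem le_gaussSup (x : L) (i : Fin pb.dim) :
    v (pb.basis.repr x i) * (γ : Γ) ^ (i : ℕ) ≤ pb.gaussSup v γ x :=
  Finset.le_sup (f := fun i : Fin pb.dim => v (pb.basis.repr x i) * (γ : Γ) ^ (i : ℕ))
    (Finset.mem_univ i)

theorem gaussSup_le_iff {x : L} {g : Γ} :
    pb.gaussSup v γ x ≤ g ↔ ∀ i : Fin pb.dim, v (pb.basis.repr x i) * (γ : Γ) ^ (i : ℕ) ≤ g := by
  simp [gaussSup, Finset.sup_le_iff]

theorem gaussSup_lt_iff {x : L} {g : Γ} (hg : 0 < g) :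
    pb.gaussSup v γ x < g ↔ ∀ i : Fin pb.dim, v (pb.basis.repr x i) * (γ : Γ) ^ (i : ℕ) < g := by
  rw [gaussSup, Finset.sup_lt_iff (bot_eq_zero (α := Γ) ▸ hg)]
  simp

theorem gaussSup_zero : pb.gaussSup v γ 0 = 0 := by
  simp [gaussSup]

theorem gaussSup_neg (x : L) : pb.gaussSup v γ (-x) = pb.gaussSup v γ x := by
  simp [gaussSup]

theorem gaussSup_add_le (x y : L) :
    pb.gaussSup v γ (x + y) ≤ max (pb.gaussSup v γ x) (pb.gaussSup v γ y) := by
  rw [gaussSup_le_iff]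
  intro i
  rw [map_add, Finsupp.add_apply]
  calc v (pb.basis.repr x i + pb.basis.repr y i) * (γ : Γ) ^ (i : ℕ)
      ≤ max (v (pb.basis.repr x i)) (v (pb.basis.repr y i)) * (γ : Γ) ^ (i : ℕ) :=
        mul_le_mul_left (v.map_add _ _) _
    _ = max (v (pb.basis.repr x i) * (γ : Γ) ^ (i : ℕ))
          (v (pb.basis.repr y i) * (γ : Γ) ^ (i : ℕ)) := (max_mul_mul_right _ _ _).symm
    _ ≤ _ := max_le_max (le_gaussSup x i) (le_gaussSup y i)

theorem gaussSup_sub_le (x y : L) :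
    pb.gaussSup v γ (x - y) ≤ max (pb.gaussSup v γ x) (pb.gaussSup v γ y) := by
  simpa [sub_eq_add_neg, gaussSup_neg] using gaussSup_add_le (pb := pb) (v := v) (γ := γ) x (-y)

theorem gaussSup_sum_le {ι : Type*} (s : Finset ι) (f : ι → L) {g : Γ}
    (hf : ∀ k ∈ s, pb.gaussSup v γ (f k) ≤ g) : pb.gaussSup v γ (∑ k ∈ s, f k) ≤ g := by
  rw [gaussSup_le_iff]
  intro i
  rw [map_sum, Finset.sum_apply', ← le_mul_inv_iff₀ (by simp [zero_lt_iff])]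
  refine v.map_sum_le fun k hk => ?_
  rw [le_mul_inv_iff₀ (by simp [zero_lt_iff])]
  exact (le_gaussSup _ i).trans (hf k hk)

theorem gaussSup_smul_basis (c : K) (i : Fin pb.dim) :
    pb.gaussSup v γ (c • pb.basis i) = v c * (γ : Γ) ^ (i : ℕ) := by
  have hrepr : pb.basis.repr (c • pb.basis i) = Finsupp.single i c := by
    rw [map_smul, pb.basis.repr_self, Finsupp.smul_single, smul_eq_mul, mul_one]
  refine le_antisymm (gaussSup_le_iff.mpr fun j => ?_) ?_
  · rw [hrepr]
    rcases eq_or_ne j i with rfl | hji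
    · rw [Finsupp.single_eq_same]
    · rw [Finsupp.single_eq_of_ne hji, map_zero, zero_mul]
      exact zero_le
  · simpa only [hrepr, Finsupp.single_eq_same] using
      le_gaussSup (pb := pb) (v := v) (γ := γ) (c • pb.basis i) i

theorem exists_eq_gaussSup {x : L} (hx : x ≠ 0) : ∃ i, pb.basis.repr x i ≠ 0 ∧
    pb.gaussSup v γ x = v (pb.basis.repr x i) * (γ : Γ) ^ (i : ℕ) := by
  obtain ⟨i, hi⟩ : ∃ i, pb.basis.repr x i ≠ 0 := by
    by_contra! h
    exact hx (pb.basis.repr.map_eq_zero_iff.mp (Finsupp.ext h))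
  have hne : pb.gaussSup v γ x ≠ 0 :=
    ne_of_gt (lt_of_lt_of_le (by simp [zero_lt_iff, hi]) (le_gaussSup x i))
  have : Nonempty (Fin pb.dim) := ⟨⟨0, pb.dim_pos⟩⟩
  obtain ⟨j, -, hj⟩ := Finset.exists_mem_eq_sup Finset.univ Finset.univ_nonempty
    fun i : Fin pb.dim => v (pb.basis.repr x i) * (γ : Γ) ^ (i : ℕ)
  refine ⟨j, fun h0 => hne ?_, hj⟩
  rw [gaussSup, hj, h0, map_zero, zero_mul]

theorem gaussSup_pos {x : L} (hx : x ≠ 0) : 0 < pb.gaussSup v γ x := by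
  obtain ⟨i, hi0, hi⟩ := exists_eq_gaussSup (v := v) (γ := γ) hx
  rw [hi]
  simpa [zero_lt_iff] using hi0

theorem gaussSup_sub_smul_gen_pow_lt {x : L} {i : Fin pb.dim} {g : Γ} (hg : 0 < g)
    (h : ∀ j ≠ i, v (pb.basis.repr x j) * (γ : Γ) ^ (j : ℕ) < g) :
    pb.gaussSup v γ (x - pb.basis.repr x i • pb.gen ^ (i : ℕ)) < g := by
  rw [gaussSup_lt_iff hg]
  intro j
  rw [← pb.basis_eq_pow, map_sub, map_smul, pb.basis.repr_self, Finsupp.sub_apply,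
    Finsupp.smul_apply, smul_eq_mul]
  rcases eq_or_ne j i with rfl | hji
  · simpa using hg
  · simpa [Finsupp.single_eq_of_ne hji] using h j hji

end GaussSup

variable {pb : PowerBasis K L} {v : Valuation K Γ} {γ : Γˣ} {b₀ : K}

section Radical

theorem gaussSup_smul_gen_pow (hgen : pb.gen ^ pb.dim = algebraMap K L b₀)
    (hb₀ : v b₀ = (γ : Γ) ^ pb.dim) (c : K) (k : ℕ) :
    pb.gaussSup v γ (c • pb.gen ^ k) = v c * (γ : Γ) ^ k := by
  induction k using Nat.strong_induction_on generalizing c with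
  | _ k ih =>
    rcases lt_or_ge k pb.dim with hk | hk
    · simpa [pb.basis_eq_pow] using gaussSup_smul_basis (pb := pb) (v := v) (γ := γ) c ⟨k, hk⟩
    · obtain ⟨m, rfl⟩ := Nat.exists_eq_add_of_le hk
      have hm : m < pb.dim + m := by have := pb.dim_pos; omega
      have hsmul : c • pb.gen ^ (pb.dim + m) = (c * b₀) • pb.gen ^ m := by
        rw [pow_add, hgen, Algebra.smul_def, Algebra.smul_def, map_mul, mul_assoc]
      rw [hsmul, ih m hm, map_mul, hb₀, pow_add, mul_assoc]

theorem gaussSup_algebraMap (hgen : pb.gen ^ pb.dim = algebraMap K L b₀)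
    (hb₀ : v b₀ = (γ : Γ) ^ pb.dim) (a : K) : pb.gaussSup v γ (algebraMap K L a) = v a := by
  simpa [Algebra.algebraMap_eq_smul_one] using gaussSup_smul_gen_pow hgen hb₀ a 0

theorem gaussSup_gen (hgen : pb.gen ^ pb.dim = algebraMap K L b₀)
    (hb₀ : v b₀ = (γ : Γ) ^ pb.dim) : pb.gaussSup v γ pb.gen = γ := by
  simpa using gaussSup_smul_gen_pow hgen hb₀ 1 1

theorem gaussSup_mul_le (hgen : pb.gen ^ pb.dim = algebraMap K L b₀)
    (hb₀ : v b₀ = (γ : Γ) ^ pb.dim) (x y : L) :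
    pb.gaussSup v γ (x * y) ≤ pb.gaussSup v γ x * pb.gaussSup v γ y := by
  conv_lhs => rw [← pb.basis.sum_repr x, ← pb.basis.sum_repr y, Finset.sum_mul_sum]
  refine gaussSup_sum_le _ _ fun i _ => gaussSup_sum_le _ _ fun j _ => ?_
  rw [smul_mul_smul_comm, pb.basis_eq_pow, pb.basis_eq_pow, ← pow_add,
    gaussSup_smul_gen_pow hgen hb₀, map_mul, pow_add, mul_mul_mul_comm]
  exact mul_le_mul' (le_gaussSup x i) (le_gaussSup y j)

end Radical

section Dominant

theorem eq_of_mul_pow_eq (hγ : ∀ k, 0 < k → k < pb.dim → γ ^ k ∉ valueGroupOf v)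
    {a c : K} (ha : a ≠ 0) (hc : c ≠ 0) {i j : Fin pb.dim}
    (h : v a * (γ : Γ) ^ (i : ℕ) = v c * (γ : Γ) ^ (j : ℕ)) : i = j := by
  wlog hij : (i : ℕ) ≤ j generalizing a c i j
  · exact (this hc ha h.symm (le_of_not_ge hij)).symm
  obtain ⟨k, hk⟩ := Nat.exists_eq_add_of_le hij
  rcases Nat.eq_zero_or_pos k with rfl | hk₀
  · exact Fin.ext hk.symm
  refine absurd ((mem_valueGroupOf_iff v).mpr ⟨a / c, div_ne_zero ha hc, ?_⟩)
    (hγ k hk₀ (by omega))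
  have hvc : v c ≠ 0 := by simpa using hc
  have hva : v a = v c * (γ : Γ) ^ k := by
    refine mul_right_cancel₀ (pow_ne_zero (i : ℕ) γ.ne_zero) ?_
    rw [h, hk, pow_add]
    ac_rfl
  rw [map_div₀, hva, mul_div_cancel_left₀ _ hvc, Units.val_pow_eq_pow_val]

theorem exists_dominant_term (hγ : ∀ k, 0 < k → k < pb.dim → γ ^ k ∉ valueGroupOf v) {x : L}
    (hx : x ≠ 0) : ∃ i, pb.gaussSup v γ x = v (pb.basis.repr x i) * (γ : Γ) ^ (i : ℕ) ∧
      ∀ j ≠ i, v (pb.basis.repr x j) * (γ : Γ) ^ (j : ℕ) < pb.gaussSup v γ x := by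
  obtain ⟨i, hi0, hi⟩ := exists_eq_gaussSup (v := v) (γ := γ) hx
  refine ⟨i, hi, fun j hji => (le_gaussSup x j).lt_of_ne fun hj => hji ?_⟩
  have hj0 : pb.basis.repr x j ≠ 0 := by
    rintro h0
    rw [h0, map_zero, zero_mul] at hj
    exact (gaussSup_pos hx).ne hj
  exact eq_of_mul_pow_eq hγ hj0 hi0 (hj.trans hi)

theorem gaussSup_mul (hgen : pb.gen ^ pb.dim = algebraMap K L b₀)
    (hb₀ : v b₀ = (γ : Γ) ^ pb.dim) (hγ : ∀ k, 0 < k → k < pb.dim → γ ^ k ∉ valueGroupOf v)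
    (x y : L) : pb.gaussSup v γ (x * y) = pb.gaussSup v γ x * pb.gaussSup v γ y := by
  rcases eq_or_ne x 0 with rfl | hx
  · simp [gaussSup_zero]
  rcases eq_or_ne y 0 with rfl | hy
  · simp [gaussSup_zero]
  obtain ⟨i, hxi, hxlt⟩ := exists_dominant_term hγ hx
  obtain ⟨j, hyj, hylt⟩ := exists_dominant_term hγ hy
  set mx := pb.basis.repr x i • pb.gen ^ (i : ℕ)
  set my := pb.basis.repr y j • pb.gen ^ (j : ℕ)
  have hmx : pb.gaussSup v γ mx = pb.gaussSup v γ x := by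
    rw [gaussSup_smul_gen_pow hgen hb₀, hxi]
  have hx' : pb.gaussSup v γ (x - mx) < pb.gaussSup v γ x :=
    gaussSup_sub_smul_gen_pow_lt (gaussSup_pos hx) hxlt
  have hy' : pb.gaussSup v γ (y - my) < pb.gaussSup v γ y :=
    gaussSup_sub_smul_gen_pow_lt (gaussSup_pos hy) hylt
  have hdom : pb.gaussSup v γ (mx * my) = pb.gaussSup v γ x * pb.gaussSup v γ y := by
    rw [smul_mul_smul_comm, ← pow_add, gaussSup_smul_gen_pow hgen hb₀, map_mul, pow_add,
      mul_mul_mul_comm, hxi, hyj]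
  have hrest : pb.gaussSup v γ (mx * (y - my) + (x - mx) * y)
      < pb.gaussSup v γ x * pb.gaussSup v γ y := by
    refine (gaussSup_add_le _ _).trans_lt (max_lt ?_ ?_)
    · calc _ ≤ pb.gaussSup v γ mx * pb.gaussSup v γ (y - my) := gaussSup_mul_le hgen hb₀ _ _
        _ < _ := by rw [hmx]; exact mul_lt_mul_of_pos_left hy' (gaussSup_pos hx)
    · calc _ ≤ pb.gaussSup v γ (x - mx) * pb.gaussSup v γ y := gaussSup_mul_le hgen hb₀ _ _
        _ < _ := mul_lt_mul_of_pos_right hx' (gaussSup_pos hy)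
  refine (gaussSup_mul_le hgen hb₀ x y).antisymm ?_
  have hsplit : mx * my = x * y - (mx * (y - my) + (x - mx) * y) := by ring
  have := gaussSup_sub_le (pb := pb) (v := v) (γ := γ) (x * y) (mx * (y - my) + (x - mx) * y)
  rw [← hsplit, hdom] at this
  exact (le_max_iff.mp this).resolve_right hrest.not_ge

end Dominant

variable (pb v γ) in
noncomputable def gaussValuation (hgen : pb.gen ^ pb.dim = algebraMap K L b₀)
    (hb₀ : v b₀ = (γ : Γ) ^ pb.dim) (hγ : ∀ k, 0 < k → k < pb.dim → γ ^ k ∉ valueGroupOf v) :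
    Valuation L Γ where
  toFun := pb.gaussSup v γ
  map_zero' := gaussSup_zero
  map_one' := by simpa using gaussSup_algebraMap hgen hb₀ 1
  map_mul' := gaussSup_mul hgen hb₀ hγ
  map_add_le_max' := gaussSup_add_le

variable (hgen : pb.gen ^ pb.dim = algebraMap K L b₀) (hb₀ : v b₀ = (γ : Γ) ^ pb.dim)
  (hγ : ∀ k, 0 < k → k < pb.dim → γ ^ k ∉ valueGroupOf v)

theorem gaussValuation_apply (x : L) :
    pb.gaussValuation v γ hgen hb₀ hγ x = pb.gaussSup v γ x := rfl

theorem comap_gaussValuation :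
    (pb.gaussValuation v γ hgen hb₀ hγ).comap (algebraMap K L) = v :=
  Valuation.ext (gaussSup_algebraMap hgen hb₀)

theorem gaussValuation_gen : pb.gaussValuation v γ hgen hb₀ hγ pb.gen = γ :=
  gaussSup_gen hgen hb₀

theorem eq_gaussValuation {w : Valuation L Γ} (hw : w.comap (algebraMap K L) = v) :
    w = pb.gaussValuation v γ hgen hb₀ hγ := by
  have hwa : ∀ a, w (algebraMap K L a) = v a := fun a => by rw [← hw, Valuation.comap_apply]
  have hwgen : w pb.gen = γ := by
    refine (pow_left_inj₀ zero_le zero_le pb.dim_pos.ne').mp ?_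
    rw [← map_pow, hgen, hwa, hb₀]
  refine Valuation.eq_of_forall_le fun x => ?_
  rw [gaussValuation_apply]
  conv_lhs => rw [← pb.basis.sum_repr x]
  refine w.map_sum_le fun i _ => ?_
  rw [pb.basis_eq_pow, Algebra.smul_def, map_mul, map_pow, hwa, hwgen]
  exact le_gaussSup (v := v) (γ := γ) x i

theorem valueGroupOf_gaussValuation :
    valueGroupOf (pb.gaussValuation v γ hgen hb₀ hγ) = valueGroupOf v ⊔ Subgroup.zpowers γ := by
  refine le_antisymm ?_ (sup_le ?_ ?_)
  · rintro _ ⟨u, rfl⟩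
    obtain ⟨i, hi0, hi⟩ := exists_eq_gaussSup (v := v) (γ := γ) u.ne_zero
    have hu : Units.map (pb.gaussValuation v γ hgen hb₀ hγ).toMonoidWithZeroHom.toMonoidHom u =
        Units.mk0 (v (pb.basis.repr u i)) (by simpa using hi0) * γ ^ (i : ℕ) :=
      Units.ext hi
    rw [hu]
    exact mul_mem (Subgroup.mem_sup_left ((mem_valueGroupOf_iff v).mpr ⟨_, hi0, rfl⟩))
      (Subgroup.mem_sup_right (pow_mem (Subgroup.mem_zpowers γ) _))
  · rintro _ ⟨u, rfl⟩
    exact ⟨Units.map (algebraMap K L : K →* L) u, Units.ext (gaussSup_algebraMap hgen hb₀ u)⟩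
  · rw [Subgroup.zpowers_le]
    have hgen0 : pb.gen ≠ 0 := (pb.gaussValuation v γ hgen hb₀ hγ).ne_zero_iff.mp
      (by rw [gaussValuation_gen]; exact γ.ne_zero)
    exact ⟨Units.mk0 pb.gen hgen0, Units.ext (gaussSup_gen hgen hb₀)⟩

theorem gaussValuation_sub_algebraMap_lt_one {y : L}
    (hy : pb.gaussValuation v γ hgen hb₀ hγ y ≤ 1) :
    pb.gaussValuation v γ hgen hb₀ hγ
      (y - algebraMap K L (pb.basis.repr y ⟨0, pb.dim_pos⟩)) < 1 := by
  rw [Algebra.algebraMap_eq_smul_one, ← pow_zero pb.gen, gaussValuation_apply]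
  refine gaussSup_sub_smul_gen_pow_lt (i := ⟨0, pb.dim_pos⟩) zero_lt_one fun j hj => ?_
  refine ((le_gaussSup y j).trans hy).lt_of_ne fun h1 => hj ?_
  have hy0 : pb.basis.repr y j ≠ 0 := by
    rintro h0
    simp [h0] at h1
  exact eq_of_mul_pow_eq hγ hy0 one_ne_zero (by simpa using h1)

instance hasExtension_gaussValuation : v.HasExtension (pb.gaussValuation v γ hgen hb₀ hγ) :=
  .of_comap_eq (comap_gaussValuation hgen hb₀ hγ)

theorem bijective_algebraMap_residueField_gaussValuation :
    Function.Bijective (algebraMap (ResidueField v.valuationSubring)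
      (ResidueField (pb.gaussValuation v γ hgen hb₀ hγ).valuationSubring)) :=
  Valuation.HasExtension.bijective_algebraMap_residueField v _
    fun _ hy => ⟨_, gaussValuation_sub_algebraMap_lt_one hgen hb₀ hγ hy⟩

end PowerBasis

/-- Let `(K₀, v₀)` be a valued field with value group `Γ₀`, let `p` be a prime and let
`γ ∉ Γ₀` with `γ^p ∈ Γ₀` (multiplicative notation). Choose `b₀ ∈ K₀` with `v₀ b₀ = γ^p`
and let `b` be a root of `X^p − b₀`. Then `X^p − b₀` is irreducible over `K₀`, the
valuation `v₀` extends uniquely to `K₀(b)`, the extension satisfies `w b = γ`, its value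
group is generated by `Γ₀` and `γ`, and its residue field is unchanged. -/
theorem extension_by_pth_root_of_value
    {Γ : Type*} [LinearOrderedCommGroupWithZero Γ] (K₀ : Type*) [Field K₀]
    (v₀ : Valuation K₀ Γ) (p : ℕ) (hp : p.Prime) (γ : Γˣ)
    (hγ : γ ∉ valueGroupOf v₀) (hγp : γ ^ p ∈ valueGroupOf v₀)
    (b₀ : K₀) (hb₀ : v₀ b₀ = (γ : Γ) ^ p)
    (b : AlgebraicClosure K₀) (hb : b ^ p = algebraMap K₀ (AlgebraicClosure K₀) b₀) :
    Irreducible (X ^ p - C b₀ : Polynomial K₀) ∧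
    ∃ w : Valuation (IntermediateField.adjoin K₀ {b} :
        IntermediateField K₀ (AlgebraicClosure K₀)) Γ,
      w.comap (algebraMap K₀ _) = v₀ ∧
      (∀ w' : Valuation (IntermediateField.adjoin K₀ {b} :
          IntermediateField K₀ (AlgebraicClosure K₀)) Γ,
        w'.comap (algebraMap K₀ _) = v₀ → w' = w) ∧
      w ⟨b, IntermediateField.mem_adjoin_simple_self K₀ b⟩ = (γ : Γ) ∧
      valueGroupOf w = valueGroupOf v₀ ⊔ Subgroup.zpowers γ ∧
      Nonempty (ResidueField w.valuationSubring ≃+* ResidueField v₀.valuationSubring) := by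
  have hirr := irreducible_X_pow_sub_C_of_notMem_valueGroupOf v₀ hp hγ hb₀
  have hroot : aeval b (X ^ p - C b₀) = 0 := by simp [hb]
  have hint : IsIntegral K₀ b :=
    ⟨X ^ p - C b₀, monic_X_pow_sub_C b₀ hp.ne_zero, by rw [← aeval_def, hroot]⟩
  set pb := IntermediateField.adjoin.powerBasis hint
  have hdim : pb.dim = p := by
    rw [IntermediateField.adjoin.powerBasis_dim, ← minpoly.eq_of_irreducible_of_monic hirr hroot
      (monic_X_pow_sub_C b₀ hp.ne_zero), natDegree_X_pow_sub_C]
  have hgen : pb.gen ^ pb.dim = algebraMap K₀ _ b₀ := by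
    rw [hdim]
    exact Subtype.ext hb
  have hb₀' : v₀ b₀ = (γ : Γ) ^ pb.dim := hdim ▸ hb₀
  have hγ' : ∀ k, 0 < k → k < pb.dim → γ ^ k ∉ valueGroupOf v₀ :=
    hdim ▸ fun _ hk₀ hkp => Subgroup.pow_notMem_of_lt_prime hp hγ hγp hk₀ hkp
  exact ⟨hirr, pb.gaussValuation v₀ γ hgen hb₀' hγ',
    PowerBasis.comap_gaussValuation hgen hb₀' hγ',
    fun _ hw' => PowerBasis.eq_gaussValuation hgen hb₀' hγ' hw',
    PowerBasis.gaussValuation_gen hgen hb₀' hγ',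
    PowerBasis.valueGroupOf_gaussValuation hgen hb₀' hγ',
    ⟨(RingEquiv.ofBijective _
      (PowerBasis.bijective_algebraMap_residueField_gaussValuation hgen hb₀' hγ')).symm⟩⟩
end

section
/- Let K be a perfectoid field of residue characteristic p with valuation v. The tilt K^♭ = lim_{x ↦ x^p} K, i.e. the set of sequences (x_n)_{n∈ω} ∈ K^ω with x_{n+1}^p = x_n, with coordinatewise multiplication and with addition (x_n)+(y_n) = (z_n) where z_n = lim_{m→∞}(x_{n+m}+y_{n+m})^{p^m}, is a perfect field of characteristic p. -/
/-!
For integral `x, y` the binomial theorem gives `(x + y) ^ p ≡ x ^ p + y ^ p` modulo `p`, and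
`x ≡ y` modulo `p` implies `x ^ p ^ m ≡ y ^ p ^ m` modulo `p ^ (m + 1)`. Hence for integral
`a, b` in the tilt the approximations `(a (n + m) + b (n + m)) ^ p ^ m` form a Cauchy sequence in
the complete field `K`, whose limit is congruent to `a n + b n` modulo `p`. For integral
`a, b, c` this makes both bracketings of `a + b + c` limits of
`(a (n + m) + b (n + m) + c (n + m)) ^ p ^ m`, which gives associativity. Since the
approximations are homogeneous under coordinatewise multiplication, and finitely many elements
become integral after multiplication by a single nonzero element (`1` or an inverse), everything
extends from integral elements to all of the tilt. Coordinatewise inversion makes it a field; every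
coordinate of `p • 1` is congruent to `p`, hence has valuation at most `v p < 1`, and the
relation `x (n + m) ^ p ^ m = x n` then forces `p • 1 = 0`. Frobenius is the shift of coordinates.
-/

set_option synthInstance.maxHeartbeats 1000000

open Filter

/-- The underlying set of the tilt of `K`: sequences `(x_n)` in `K` with `x_{n+1}^p = x_n`. -/
def TiltCarrier (K : Type*) [Field K] (p : ℕ) : Type _ :=
  {f : ℕ → K // ∀ n, f (n + 1) ^ p = f n}

/-- The assertion that a field structure on the tilt of `K` has coordinatewise
multiplication, addition given by `((x_n) + (y_n))_n = lim_m (x_{n+m} + y_{n+m})^{p^m}`,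
characteristic `p`, and bijective Frobenius (perfectness). -/
def TiltFieldSpec (K : Type*) [Field K] [Valued K NNReal] (p : ℕ)
    (F : Field (TiltCarrier K p)) : Prop :=
  letI := F
  (∀ a b : TiltCarrier K p, (a * b).val = fun n => a.val n * b.val n) ∧
  (∀ a b : TiltCarrier K p, ∀ n : ℕ,
    Tendsto (fun m : ℕ => (a.val (n + m) + b.val (n + m)) ^ p ^ m) atTop
      (nhds ((a + b).val n))) ∧
  CharP (TiltCarrier K p) p ∧
  Function.Bijective (fun x : TiltCarrier K p => x ^ p)

open scoped NNReal Topology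

namespace Valuation

variable {K Γ₀ : Type*} [Field K] [LinearOrderedCommGroupWithZero Γ₀] (v : Valuation K Γ₀)

theorem natCast_lt_one_of_charP_residueField {p : ℕ}
    [CharP (IsLocalRing.ResidueField v.valuationSubring) p] : v (p : K) < 1 := by
  have hres : IsLocalRing.residue v.valuationSubring (p : v.valuationSubring) = 0 := by
    rw [map_natCast, CharP.cast_eq_zero]
  simpa using (v.mem_maximalIdeal_iff).mp ((IsLocalRing.residue_eq_zero_iff _).mp hres)

theorem map_natCast_le_one (n : ℕ) : v (n : K) ≤ 1 :=
  natCast_mem v.integer n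

theorem natCast_pow_dvd_iff_le {p k : ℕ} {x : v.integer} :
    (p : v.integer) ^ k ∣ x ↔ v (x : K) ≤ v (p : K) ^ k := by
  rw [(Valuation.integer.integers v).dvd_iff_le]
  simp only [map_pow, map_natCast]
  rfl

variable {v} {x y : K}

theorem map_add_pow_sub_le {p : ℕ} (hp : p.Prime) (hx : v x ≤ 1) (hy : v y ≤ 1) :
    v ((x + y) ^ p - (x ^ p + y ^ p)) ≤ v (p : K) := by
  obtain ⟨r, hr⟩ := exists_add_pow_prime_eq hp (⟨x, hx⟩ : v.integer) ⟨y, hy⟩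
  have hdvd : (p : v.integer) ^ 1 ∣ (⟨x, hx⟩ + ⟨y, hy⟩) ^ p - (⟨x, hx⟩ ^ p + ⟨y, hy⟩ ^ p) :=
    ⟨⟨x, hx⟩ * ⟨y, hy⟩ * r, by rw [hr]; ring⟩
  simpa using (natCast_pow_dvd_iff_le v).mp hdvd

theorem map_pow_pow_sub_le {p : ℕ} (hx : v x ≤ 1) (hy : v y ≤ 1) (h : v (x - y) ≤ v (p : K))
    (m : ℕ) : v (x ^ p ^ m - y ^ p ^ m) ≤ v (p : K) ^ (m + 1) := by
  have hdvd : (p : v.integer) ^ 1 ∣ ⟨x, hx⟩ - ⟨y, hy⟩ :=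
    (natCast_pow_dvd_iff_le v).mpr (by simpa using h)
  simpa using (natCast_pow_dvd_iff_le v).mp (dvd_sub_pow_of_dvd_sub (by simpa using hdvd) m)

end Valuation

namespace Valued

section

variable {R Γ₀ : Type*} [Ring R] [LinearOrderedCommGroupWithZero Γ₀] [Valued R Γ₀]

instance : NonarchimedeanAddGroup R where
  is_nonarchimedean U hU := by
    obtain ⟨γ, hγ⟩ := mem_nhds_zero.mp hU
    exact ⟨⟨v.restrict.ltAddSubgroup γ, isOpen_ball R γ.1⟩, hγ⟩

theorem isClosed_setOf_map_sub_le (c y : R) : IsClosed {z : R | v (z - c) ≤ v y} := by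
  have hset : {z : R | v (z - c) ≤ v y} = (· - c) ⁻¹' {x | v.restrict x ≤ v.restrict y} := by
    ext z
    simp [Valuation.restrict_le_iff]
  rw [hset]
  exact (isClosed_closedBall R _).preimage (continuous_sub_right c)

end

section NNReal

variable {K : Type*} [Field K] [Valued K ℝ≥0]

theorem tendsto_zero_of_map_le {ι : Type*} {l : Filter ι} {z : ι → K} {u : ι → ℝ≥0}
    (h : ∀ i, v (z i) ≤ u i) (hu : Tendsto u l (𝓝 0)) : Tendsto z l (𝓝 0) := by
  rw [(hasBasis_nhds_zero K ℝ≥0).tendsto_right_iff]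
  rintro γ -
  have hγ : 0 < MonoidWithZeroHom.ValueGroup₀.embedding γ.1 := pos_iff_ne_zero.mpr fun h =>
    γ.ne_zero (MonoidWithZeroHom.ValueGroup₀.embedding_injective (h.trans (map_zero _).symm))
  filter_upwards [hu.eventually (gt_mem_nhds hγ)] with i hi
  exact (v.restrict_lt_iff_lt_embedding).mpr ((h i).trans_lt hi)

theorem tendsto_pow_pow_nhds_zero {x : K} (hx : v x < 1) {p : ℕ} (hp : 1 < p) :
    Tendsto (fun m : ℕ => x ^ p ^ m) atTop (𝓝 0) :=
  tendsto_zero_of_map_le (fun m => (map_pow v x _).le)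
    ((NNReal.tendsto_pow_atTop_nhds_zero_of_lt_one hx).comp
      (tendsto_pow_atTop_atTop_of_one_lt (by exact_mod_cast hp)))

variable {p : ℕ} (hvp : v (p : K) < 1)
include hvp

theorem tendsto_pow_pow_sub_pow_pow {X Y : ℕ → K} (hX : ∀ m, v (X m) ≤ 1) (hY : ∀ m, v (Y m) ≤ 1)
    (hXY : ∀ m, v (X m - Y m) ≤ v (p : K)) :
    Tendsto (fun m => X m ^ p ^ m - Y m ^ p ^ m) atTop (𝓝 0) :=
  tendsto_zero_of_map_le (fun m => Valuation.map_pow_pow_sub_le (hX m) (hY m) (hXY m) m)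
    ((NNReal.tendsto_pow_atTop_nhds_zero_of_lt_one hvp).comp (tendsto_add_atTop_nat 1))

theorem tendsto_pow_pow_of_map_sub_le {X Y : ℕ → K} (hX : ∀ m, v (X m) ≤ 1)
    (hY : ∀ m, v (Y m) ≤ 1) (hXY : ∀ m, v (X m - Y m) ≤ v (p : K)) {L : K}
    (hL : Tendsto (fun m => X m ^ p ^ m) atTop (𝓝 L)) :
    Tendsto (fun m => Y m ^ p ^ m) atTop (𝓝 L) := by
  simpa using hL.sub (tendsto_pow_pow_sub_pow_pow hvp hX hY hXY)

variable [CompleteSpace K]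

theorem exists_tendsto_pow_pow {c : ℕ → K} (hc : ∀ m, v (c m) ≤ 1)
    (hcc : ∀ m, v (c (m + 1) ^ p - c m) ≤ v (p : K)) :
    ∃ L, Tendsto (fun m => c m ^ p ^ m) atTop (𝓝 L) ∧ v (L - c 0) ≤ v (p : K) := by
  have hcp : ∀ m, v (c (m + 1) ^ p) ≤ 1 := fun m => by
    rw [map_pow]; exact pow_le_one' (hc _) p
  have hstep : Tendsto (fun m => c (m + 1) ^ p ^ (m + 1) - c m ^ p ^ m) atTop (𝓝 0) := by
    simpa only [pow_succ', pow_mul] using tendsto_pow_pow_sub_pow_pow hvp hcp hc hcc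
  obtain ⟨L, hL⟩ := cauchySeq_tendsto_of_complete
    (NonarchimedeanAddGroup.cauchySeq_of_tendsto_sub_nhds_zero (f := fun m => c m ^ p ^ m) hstep)
  refine ⟨L, hL, (isClosed_setOf_map_sub_le _ _).mem_of_tendsto hL (Eventually.of_forall ?_)⟩
  intro m
  induction m with
  | zero => simp
  | succ m ih =>
    have hdiff : v (c (m + 1) ^ p ^ (m + 1) - c m ^ p ^ m) ≤ v (p : K) := by
      rw [pow_succ', pow_mul]
      exact (Valuation.map_pow_pow_sub_le (hcp m) (hc m) (hcc m) m).trans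
        (pow_le_of_le_one zero_le hvp.le m.succ_ne_zero)
    simpa using v.map_add_le hdiff ih

end NNReal

end Valued

theorem neg_one_pow_pow_self (R : Type*) [Monoid R] [HasDistribNeg R] (p : ℕ) :
    ((-1 : R) ^ p) ^ p = (-1) ^ p := by
  rcases Nat.even_or_odd p with hp | hp
  · rw [hp.neg_one_pow, one_pow]
  · rw [hp.neg_one_pow, hp.neg_one_pow]

namespace TiltCarrier

variable {K : Type*} [Field K] {p : ℕ}

theorem ext {a b : TiltCarrier K p} (h : a.val = b.val) : a = b :=
  Subtype.ext h

theorem pow_pow_val_add (a : TiltCarrier K p) (n m : ℕ) : a.val (n + m) ^ p ^ m = a.val n := by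
  induction m with
  | zero => simp
  | succ m ih => rw [pow_succ', pow_mul, ← add_assoc, a.2, ih]

instance : One (TiltCarrier K p) := ⟨⟨1, fun _ => one_pow p⟩⟩

instance : Mul (TiltCarrier K p) :=
  ⟨fun a b => ⟨a.val * b.val, fun n => by simp only [Pi.mul_apply, mul_pow, a.2, b.2]⟩⟩

instance : Pow (TiltCarrier K p) ℕ :=
  ⟨fun a k => ⟨a.val ^ k, fun n => by
    simp only [Pi.pow_apply]
    rw [← pow_mul, mul_comm, pow_mul, a.2]⟩⟩

instance : Inv (TiltCarrier K p) :=
  ⟨fun a => ⟨a.val⁻¹, fun n => by simp only [Pi.inv_apply, inv_pow, a.2]⟩⟩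

/-- Coordinatewise negation is not compatible with `x ↦ x ^ p` when `p = 2`; multiplying by
`(-1) ^ p` is, and it agrees with negation for odd `p`. -/
instance : Neg (TiltCarrier K p) :=
  ⟨fun a => ⟨fun n => (-1) ^ p * a.val n, fun n => by
    rw [mul_pow, neg_one_pow_pow_self, a.2]⟩⟩

@[simp] theorem val_one (n : ℕ) : (1 : TiltCarrier K p).val n = 1 := rfl

@[simp] theorem val_mul (a b : TiltCarrier K p) (n : ℕ) : (a * b).val n = a.val n * b.val n := rfl

@[simp] theorem val_pow (a : TiltCarrier K p) (k n : ℕ) : (a ^ k).val n = a.val n ^ k := rfl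

@[simp] theorem val_inv (a : TiltCarrier K p) (n : ℕ) : a⁻¹.val n = (a.val n)⁻¹ := rfl

@[simp] theorem val_neg (a : TiltCarrier K p) (n : ℕ) : (-a).val n = (-1) ^ p * a.val n := rfl

theorem bijective_pow_self : Function.Bijective (fun x : TiltCarrier K p => x ^ p) := by
  refine ⟨fun x y h => ext (funext fun n => ?_), fun b => ?_⟩
  · simpa only [val_pow, x.2, y.2] using congrArg (fun z : TiltCarrier K p => z.val (n + 1)) h
  · exact ⟨⟨fun n => b.val (n + 1), fun n => b.2 (n + 1)⟩, ext (funext fun n => b.2 n)⟩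

def addApprox (a b : TiltCarrier K p) (n m : ℕ) : K :=
  (a.val (n + m) + b.val (n + m)) ^ p ^ m

theorem addApprox_comm (a b : TiltCarrier K p) : addApprox a b = addApprox b a := by
  funext n m
  rw [addApprox, addApprox, add_comm]

theorem addApprox_mul (s a b : TiltCarrier K p) (n : ℕ) :
    addApprox (s * a) (s * b) n = fun m => s.val n * addApprox a b n m := by
  funext m
  rw [addApprox, addApprox, val_mul, val_mul, ← mul_add, mul_pow, pow_pow_val_add]

theorem addApprox_succ (a b : TiltCarrier K p) (n m : ℕ) :
    addApprox a b (n + 1) m ^ p = addApprox a b n (m + 1) := by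
  rw [addApprox, addApprox, ← pow_mul, ← pow_succ, Nat.add_right_comm, add_assoc]

section NeZero

variable [NeZero p]

instance : Zero (TiltCarrier K p) := ⟨⟨0, fun _ => zero_pow (NeZero.ne p)⟩⟩

@[simp] theorem val_zero (n : ℕ) : (0 : TiltCarrier K p).val n = 0 := rfl

instance : CommMonoidWithZero (TiltCarrier K p) :=
  Function.Injective.commMonoidWithZero _ (fun _ _ => ext) rfl rfl (fun _ _ => rfl)
    (fun _ _ => rfl)

theorem val_eq_zero_iff {a : TiltCarrier K p} {n : ℕ} : a.val n = 0 ↔ a = 0 := by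
  refine ⟨fun h => ext (funext fun m => ?_), fun h => h ▸ rfl⟩
  have h0 : a.val 0 = 0 := by
    rw [← pow_pow_val_add a 0 n, zero_add, h, zero_pow (pow_ne_zero _ (NeZero.ne p))]
  rw [← pow_pow_val_add a 0 m, zero_add, pow_eq_zero_iff (pow_ne_zero _ (NeZero.ne p))] at h0
  exact h0

theorem val_ne_zero {a : TiltCarrier K p} (ha : a ≠ 0) (n : ℕ) : a.val n ≠ 0 :=
  mt val_eq_zero_iff.mp ha

instance : Nontrivial (TiltCarrier K p) :=
  ⟨⟨0, 1, fun h => zero_ne_one (congrArg (fun z : TiltCarrier K p => z.val 0) h)⟩⟩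

instance : NoZeroDivisors (TiltCarrier K p) where
  eq_zero_or_eq_zero_of_mul_eq_zero {a b} h := by
    simpa only [val_eq_zero_iff, val_mul, mul_eq_zero] using
      (val_eq_zero_iff (n := 0)).mpr h

instance : IsLeftCancelMulZero (TiltCarrier K p) where
  mul_left_cancel_of_ne_zero ha _ _ h := ext (funext fun n =>
    mul_left_cancel₀ (val_ne_zero ha n) (congrArg (fun z : TiltCarrier K p => z.val n) h))

theorem inv_mul_cancel_of_ne_zero {a : TiltCarrier K p} (ha : a ≠ 0) : a⁻¹ * a = 1 :=
  ext (funext fun n => inv_mul_cancel₀ (val_ne_zero ha n))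

end NeZero

section Valued

variable [Valued K ℝ≥0]

def IsIntegral (a : TiltCarrier K p) : Prop :=
  ∀ n, Valued.v (a.val n) ≤ 1

theorem isIntegral_one : IsIntegral (1 : TiltCarrier K p) :=
  fun n => by simp

theorem IsIntegral.mul {a b : TiltCarrier K p} (ha : IsIntegral a) (hb : IsIntegral b) :
    IsIntegral (a * b) :=
  fun n => by simpa only [val_mul, map_mul] using mul_le_one' (ha n) (hb n)

variable [NeZero p]

theorem isIntegral_iff {a : TiltCarrier K p} : IsIntegral a ↔ Valued.v (a.val 0) ≤ 1 := by
  refine ⟨fun h => h 0, fun h n => ?_⟩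
  rwa [← pow_pow_val_add a 0 n, zero_add, map_pow,
    pow_le_one_iff_of_nonneg zero_le (pow_ne_zero _ (NeZero.ne p))] at h

theorem exists_isIntegral_mul (a : TiltCarrier K p) :
    ∃ s : TiltCarrier K p, s ≠ 0 ∧ IsIntegral s ∧ IsIntegral (s * a) := by
  by_cases ha : IsIntegral a
  · exact ⟨1, one_ne_zero, isIntegral_one, by rwa [one_mul]⟩
  have ha0 : a ≠ 0 := by
    rintro rfl
    exact ha fun n => by simp
  refine ⟨a⁻¹, fun h => ha0 ?_, ?_, by rw [inv_mul_cancel_of_ne_zero ha0]; exact isIntegral_one⟩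
  · exact val_eq_zero_iff.mp (by simpa using congrArg (fun z : TiltCarrier K p => z.val 0) h)
  · rw [isIntegral_iff, not_le] at ha
    rw [isIntegral_iff, val_inv, map_inv₀]
    exact inv_le_one_of_one_le₀ ha.le

theorem exists_isIntegral_mul_forall (S : Finset (TiltCarrier K p)) :
    ∃ s : TiltCarrier K p, s ≠ 0 ∧ IsIntegral s ∧ ∀ a ∈ S, IsIntegral (s * a) := by
  classical
  induction S using Finset.induction_on with
  | empty => exact ⟨1, one_ne_zero, isIntegral_one, by simp⟩
  | insert a S _ ih =>
    obtain ⟨s, hs0, hs, hS⟩ := ih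
    obtain ⟨t, ht0, ht, hta⟩ := exists_isIntegral_mul a
    refine ⟨t * s, mul_ne_zero ht0 hs0, ht.mul hs, ?_⟩
    simp only [Finset.mem_insert, forall_eq_or_imp]
    refine ⟨by rw [mul_right_comm]; exact hta.mul hs, fun b hb => ?_⟩
    rw [mul_assoc]
    exact ht.mul (hS b hb)

theorem eq_zero_of_forall_map_val_le {a : TiltCarrier K p} {r : ℝ≥0} (hr : r < 1)
    (hp : 1 < p) (h : ∀ n, Valued.v (a.val n) ≤ r) : a = 0 := by
  refine val_eq_zero_iff (n := 0) |>.mp ((Valued.v.zero_iff).mp (nonpos_iff_eq_zero.mp ?_))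
  refine ge_of_tendsto' ((NNReal.tendsto_pow_atTop_nhds_zero_of_lt_one hr).comp
    (tendsto_pow_atTop_atTop_of_one_lt hp : Tendsto (p ^ · : ℕ → ℕ) atTop atTop)) fun n => ?_
  rw [Function.comp_apply, ← pow_pow_val_add a 0 n, zero_add, map_pow]
  exact pow_le_pow_left₀ zero_le (h n) _

end Valued

variable [Valued K ℝ≥0] [CompleteSpace K] [Fact p.Prime] [Fact (Valued.v (p : K) < 1)]

theorem exists_tendsto_addApprox_of_isIntegral {a b : TiltCarrier K p} (ha : IsIntegral a)
    (hb : IsIntegral b) (n : ℕ) : ∃ L, Tendsto (addApprox a b n) atTop (𝓝 L) ∧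
      Valued.v (L - (a.val n + b.val n)) ≤ Valued.v (p : K) := by
  refine Valued.exists_tendsto_pow_pow Fact.out (c := fun m => a.val (n + m) + b.val (n + m))
    (fun m => Valued.v.map_add_le (ha _) (hb _)) fun m => ?_
  rw [← a.2 (n + m), ← b.2 (n + m)]
  exact Valuation.map_add_pow_sub_le Fact.out (ha _) (hb _)

theorem exists_tendsto_addApprox (a b : TiltCarrier K p) (n : ℕ) :
    ∃ L, Tendsto (addApprox a b n) atTop (𝓝 L) := by
  classical
  obtain ⟨s, hs0, -, hS⟩ := exists_isIntegral_mul_forall {a, b}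
  obtain ⟨L, hL, -⟩ := exists_tendsto_addApprox_of_isIntegral (hS a (by simp)) (hS b (by simp)) n
  refine ⟨(s.val n)⁻¹ * L, ?_⟩
  rw [addApprox_mul] at hL
  simpa [inv_mul_cancel_left₀ (val_ne_zero hs0 n)] using hL.const_mul (s.val n)⁻¹

noncomputable instance : Add (TiltCarrier K p) :=
  ⟨fun a b => ⟨fun n => limUnder atTop (addApprox a b n), fun n =>
    tendsto_nhds_unique
      (by simpa only [addApprox_succ, Function.comp_def] using
        (tendsto_nhds_limUnder (exists_tendsto_addApprox a b (n + 1))).pow p)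
      ((tendsto_nhds_limUnder (exists_tendsto_addApprox a b n)).comp (tendsto_add_atTop_nat 1))⟩⟩

theorem tendsto_addApprox (a b : TiltCarrier K p) (n : ℕ) :
    Tendsto (addApprox a b n) atTop (𝓝 ((a + b).val n)) :=
  tendsto_nhds_limUnder (exists_tendsto_addApprox a b n)

theorem add_eq_of_tendsto {a b c : TiltCarrier K p}
    (h : ∀ n, Tendsto (addApprox a b n) atTop (𝓝 (c.val n))) : a + b = c :=
  ext (funext fun n => tendsto_nhds_unique (tendsto_addApprox a b n) (h n))

theorem map_val_add_sub_le {a b : TiltCarrier K p} (ha : IsIntegral a) (hb : IsIntegral b)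
    (n : ℕ) : Valued.v ((a + b).val n - (a.val n + b.val n)) ≤ Valued.v (p : K) := by
  obtain ⟨L, hL, hLe⟩ := exists_tendsto_addApprox_of_isIntegral ha hb n
  rwa [tendsto_nhds_unique (tendsto_addApprox a b n) hL]

theorem IsIntegral.add {a b : TiltCarrier K p} (ha : IsIntegral a) (hb : IsIntegral b) :
    IsIntegral (a + b) := fun n => by
  simpa using Valued.v.map_add_le
    ((map_val_add_sub_le ha hb n).trans (Valued.v.map_natCast_le_one p))
    (Valued.v.map_add_le (ha n) (hb n))

protected theorem add_comm (a b : TiltCarrier K p) : a + b = b + a :=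
  add_eq_of_tendsto fun n => by simpa only [addApprox_comm] using tendsto_addApprox b a n

protected theorem zero_add (a : TiltCarrier K p) : 0 + a = a :=
  add_eq_of_tendsto fun n => tendsto_const_nhds.congr fun m => by
    rw [addApprox, val_zero, zero_add, pow_pow_val_add]

protected theorem neg_add_cancel (a : TiltCarrier K p) : -a + a = 0 := by
  have hp : p.Prime := Fact.out
  -- `(-1) ^ p + 1` is `0` or `2 = p`; either way it is the error term of `(-1 + 1) ^ p`.
  have hcoef : Valued.v ((-1 : K) ^ p + 1) < 1 := by
    have := Valuation.map_add_pow_sub_le (v := Valued.v) hp (x := (-1 : K)) (y := 1)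
      (by simp) (by simp)
    rw [neg_add_cancel, zero_pow hp.ne_zero, one_pow, zero_sub, Valuation.map_neg] at this
    exact this.trans_lt Fact.out
  refine add_eq_of_tendsto fun n => ?_
  have hlim := (Valued.tendsto_pow_pow_nhds_zero hcoef hp.one_lt).mul_const (a.val n)
  rw [zero_mul] at hlim
  refine hlim.congr fun m => ?_
  rw [addApprox, val_neg, ← add_one_mul, mul_pow, pow_pow_val_add]

protected theorem mul_add (c a b : TiltCarrier K p) : c * (a + b) = c * a + c * b := by
  refine (add_eq_of_tendsto fun n => ?_).symm
  rw [addApprox_mul]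
  exact (tendsto_addApprox a b n).const_mul _

theorem tendsto_add_add_of_isIntegral {a b c : TiltCarrier K p} (ha : IsIntegral a)
    (hb : IsIntegral b) (hc : IsIntegral c) (n : ℕ) :
    Tendsto (fun m => (a.val (n + m) + b.val (n + m) + c.val (n + m)) ^ p ^ m) atTop
      (𝓝 ((a + b + c).val n)) :=
  Valued.tendsto_pow_pow_of_map_sub_le Fact.out
    (fun m => Valued.v.map_add_le ((ha.add hb) _) (hc _))
    (fun m => Valued.v.map_add_le (Valued.v.map_add_le (ha _) (hb _)) (hc _))
    (fun m => by rw [add_sub_add_right_eq_sub]; exact map_val_add_sub_le ha hb _)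
    (tendsto_addApprox (a + b) c n)

theorem add_assoc_of_isIntegral {a b c : TiltCarrier K p} (ha : IsIntegral a)
    (hb : IsIntegral b) (hc : IsIntegral c) : a + b + c = a + (b + c) := by
  rw [TiltCarrier.add_comm a (b + c)]
  refine ext (funext fun n => tendsto_nhds_unique (tendsto_add_add_of_isIntegral ha hb hc n) ?_)
  refine (tendsto_add_add_of_isIntegral hb hc ha n).congr fun m => ?_
  ring

protected theorem add_assoc (a b c : TiltCarrier K p) : a + b + c = a + (b + c) := by
  classical
  obtain ⟨s, hs0, -, hS⟩ := exists_isIntegral_mul_forall {a, b, c}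
  refine mul_left_cancel₀ hs0 ?_
  simp only [TiltCarrier.mul_add]
  exact add_assoc_of_isIntegral (hS a (by simp)) (hS b (by simp)) (hS c (by simp))

noncomputable instance : CommRing (TiltCarrier K p) :=
  { (inferInstance : CommMonoidWithZero (TiltCarrier K p)) with
    add_assoc := TiltCarrier.add_assoc
    zero_add := TiltCarrier.zero_add
    add_zero := fun a => (TiltCarrier.add_comm a 0).trans (TiltCarrier.zero_add a)
    nsmul := nsmulRec
    zsmul := zsmulRec
    neg_add_cancel := TiltCarrier.neg_add_cancel
    add_comm := TiltCarrier.add_comm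
    left_distrib := TiltCarrier.mul_add
    right_distrib := fun a b c => by
      rw [mul_comm, TiltCarrier.mul_add, mul_comm c, mul_comm c] }

theorem isIntegral_natCast (j : ℕ) : IsIntegral (j : TiltCarrier K p) := by
  induction j with
  | zero => exact fun n => by simp
  | succ j ih => exact Nat.cast_succ (R := TiltCarrier K p) j ▸ ih.add isIntegral_one

theorem map_val_natCast_sub_le (j n : ℕ) :
    Valued.v ((j : TiltCarrier K p).val n - j) ≤ Valued.v (p : K) := by
  induction j with
  | zero => simp
  | succ j ih =>
    have h := map_val_add_sub_le (isIntegral_natCast (K := K) (p := p) j) isIntegral_one n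
    rw [val_one] at h
    convert Valued.v.map_add_le h ih using 2
    push_cast
    ring

instance : CharP (TiltCarrier K p) p := by
  refine (CharP.charP_iff_prime_eq_zero Fact.out).mpr (eq_zero_of_forall_map_val_le
    (r := Valued.v (p : K)) Fact.out (Fact.out : p.Prime).one_lt fun n => ?_)
  have h : Valued.v ((p : TiltCarrier K p).val n - p) ≤ Valued.v (p : K) :=
    map_val_natCast_sub_le p n
  simpa using Valued.v.map_add_le h le_rfl

noncomputable instance : Field (TiltCarrier K p) :=
  { (inferInstance : CommRing (TiltCarrier K p)) with
    inv := Inv.inv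
    exists_pair_ne := exists_pair_ne (TiltCarrier K p)
    mul_inv_cancel := fun a ha => by rw [mul_comm]; exact inv_mul_cancel_of_ne_zero ha
    inv_zero := ext (funext fun n => by simp)
    nnqsmul := _
    nnqsmul_def := fun _ _ => rfl
    qsmul := _
    qsmul_def := fun _ _ => rfl }

end TiltCarrier

theorem tilt_is_perfect_field_of_char_p_general
    (p : ℕ) (hp : p.Prime) (K : Type*) [Field K] [Valued K NNReal] [CompleteSpace K]
    (hchar : CharP (IsLocalRing.ResidueField (Valued.v.valuationSubring : ValuationSubring K)) p) :
    ∃ F : Field (TiltCarrier K p), TiltFieldSpec K p F := by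
  have : Fact p.Prime := ⟨hp⟩
  have : Fact (Valued.v (p : K) < 1) := ⟨Valued.v.natCast_lt_one_of_charP_residueField⟩
  exact ⟨inferInstance, fun _ _ => rfl, TiltCarrier.tendsto_addApprox, inferInstance,
    TiltCarrier.bijective_pow_self⟩

/-- Let `K` be a perfectoid field of residue characteristic `p`: a complete valued field
with value group a dense subgroup of `ℝ` (multiplicatively, of `ℝ≥0`), with `p` topologically
nilpotent and Frobenius surjective on `O_K/(p)`. Then the tilt
`K^♭ = lim_{x ↦ x^p} K` is a perfect field of characteristic `p`, with coordinatewise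
multiplication and the limit formula for addition. -/
theorem tilt_is_perfect_field_of_char_p
    (p : ℕ) (hp : p.Prime) (K : Type*) [Field K] [Valued K NNReal] [CompleteSpace K]
    (hdense : Dense (Set.range fun x : Kˣ => Valued.v (x : K)))
    (hchar : CharP (IsLocalRing.ResidueField (Valued.v.valuationSubring : ValuationSubring K)) p)
    (hfrob : ∀ x : (Valued.v.valuationSubring : ValuationSubring K) ⧸
        (Ideal.span {((p : ℕ) : (Valued.v.valuationSubring : ValuationSubring K))}),
      ∃ y, y ^ p = x) :
    ∃ F : Field (TiltCarrier K p), TiltFieldSpec K p F :=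
  tilt_is_perfect_field_of_char_p_general p hp K hchar
end
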